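/- arXiv:1002.4377 — 11 statements merged into one kernel-verified Lean document; each statement's English description precedes it below -/
import Mathlib

section
/- Let (J₁,J₂,W) be a bigraphon, F = (U₁,U₂,E) a bigraph, and S₁ ⊆ U₁, S₂ ⊆ U₂ such that no edge of F connects S₁ to S₂. Then the partially integrated density t = t^b_{S₁,S₂}(F,W;·): J₁^{S₁} × J₂^{S₂} → ℝ satisfies |t(x,y) − t(x',y')| ≤ |E| · max{ max_{i∈S₁} r₁(x_i,x_i'), max_{j∈S₂} r₂(y_j,y_j') }. -/
open MeasureTheory

/-- Combine an assignment on `S` with an assignment on the complement of `S`. -/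
noncomputable def extendAssign {V J : Type*} [DecidableEq V] (S : Finset V)
    (x : {v : V // v ∈ S} → J) (x'' : {v : V // v ∉ S} → J) (v : V) : J :=
  if h : v ∈ S then x ⟨v, h⟩ else x'' ⟨v, h⟩

lemma abs_prod_sub_prod_le_sum {ι : Type*} [DecidableEq ι] (s : Finset ι) (a b : ι → ℝ)
    (ha0 : ∀ i, 0 ≤ a i) (ha1 : ∀ i, a i ≤ 1)
    (hb0 : ∀ i, 0 ≤ b i) (hb1 : ∀ i, b i ≤ 1) :
    |∏ i ∈ s, a i - ∏ i ∈ s, b i| ≤ ∑ i ∈ s, |a i - b i| := by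
  induction s using Finset.induction_on with
  | empty => simp
  | @insert j s hj ih =>
    rw [Finset.prod_insert hj, Finset.prod_insert hj, Finset.sum_insert hj]
    have key : a j * ∏ i ∈ s, a i - b j * ∏ i ∈ s, b i
        = a j * (∏ i ∈ s, a i - ∏ i ∈ s, b i) + (a j - b j) * ∏ i ∈ s, b i := by ring
    rw [key]
    refine (abs_add_le _ _).trans ?_
    rw [abs_mul, abs_mul]
    have h1 : |a j| ≤ 1 := abs_le.2 ⟨by linarith [ha0 j], ha1 j⟩
    have h2 : |∏ i ∈ s, b i| ≤ 1 := abs_le.2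
      ⟨by have := Finset.prod_nonneg (fun i _ => hb0 i) (s := s); linarith,
       Finset.prod_le_one (fun i _ => hb0 i) (fun i _ => hb1 i)⟩
    have e1 : |a j| * |∏ i ∈ s, a i - ∏ i ∈ s, b i| ≤ |∏ i ∈ s, a i - ∏ i ∈ s, b i| :=
      mul_le_of_le_one_left (abs_nonneg _) h1
    have e2 : |a j - b j| * |∏ i ∈ s, b i| ≤ |a j - b j| :=
      mul_le_of_le_one_right (abs_nonneg _) h2
    linarith

lemma map_eval_pi_prob {ι : Type*} [Fintype ι] [DecidableEq ι] {α : Type*} [MeasurableSpace α]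
    (μ : Measure α) [IsProbabilityMeasure μ] (j : ι) :
    (Measure.pi fun _ : ι => μ).map (Function.eval j) = μ := by
  apply Measure.ext
  intro s hs
  rw [Measure.map_apply (measurable_pi_apply j) hs, Set.eval_preimage, Measure.pi_pi]
  rw [Finset.prod_eq_single j (fun i _ hi => by simp [Function.update_of_ne hi]) (by simp)]
  simp [Function.update_self]

/-- Lemma (bigraphon version): for a bigraphon `(J₁,J₂,W)`, a bigraph
`F = (U₁,U₂,E)` and sets `S₁ ⊆ U₁`, `S₂ ⊆ U₂` such that no edge connects
`S₁` to `S₂`, the partially integrated density `t^b_{S₁,S₂}(F,W;·)` satisfies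
`|t(x,y) − t(x',y')| ≤ |E| · max{max_{i∈S₁} r₁(x_i,x_i'), max_{j∈S₂} r₂(y_j,y_j')}`,
the maximum being expressed via a common upper bound `C ≥ 0`. -/
theorem bigraphon_density_Lipschitz
    {J₁ J₂ : Type*} [MeasurableSpace J₁] [MeasurableSpace J₂]
    (μ₁ : Measure J₁) (μ₂ : Measure J₂)
    [IsProbabilityMeasure μ₁] [IsProbabilityMeasure μ₂]
    (W : J₁ → J₂ → ℝ)
    (hWmeas : Measurable (fun p : J₁ × J₂ => W p.1 p.2))
    (hW0 : ∀ x y, 0 ≤ W x y) (hW1 : ∀ x y, W x y ≤ 1)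
    (r₁ : J₁ → J₁ → ℝ) (r₂ : J₂ → J₂ → ℝ)
    (hr₁ : ∀ x x', r₁ x x' = ∫ z, |W x z - W x' z| ∂μ₂)
    (hr₂ : ∀ y y', r₂ y y' = ∫ z, |W z y - W z y'| ∂μ₁)
    {U₁ U₂ : Type*} [Fintype U₁] [Fintype U₂] [DecidableEq U₁] [DecidableEq U₂]
    (E : Finset (U₁ × U₂)) (S₁ : Finset U₁) (S₂ : Finset U₂)
    (hindep : ∀ e ∈ E, ¬(e.1 ∈ S₁ ∧ e.2 ∈ S₂))
    (t : ({u : U₁ // u ∈ S₁} → J₁) → ({u : U₂ // u ∈ S₂} → J₂) → ℝ)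
    (ht : ∀ x y, t x y =
      ∫ x'' : {u : U₁ // u ∉ S₁} → J₁,
        ∫ y'' : {u : U₂ // u ∉ S₂} → J₂,
          (∏ e ∈ E, W (extendAssign S₁ x x'' e.1) (extendAssign S₂ y y'' e.2))
        ∂(Measure.pi fun _ => μ₂) ∂(Measure.pi fun _ => μ₁))
    (x x' : {u : U₁ // u ∈ S₁} → J₁) (y y' : {u : U₂ // u ∈ S₂} → J₂)
    (C : ℝ) (hC0 : 0 ≤ C)
    (hC₁ : ∀ i : {u : U₁ // u ∈ S₁}, r₁ (x i) (x' i) ≤ C)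
    (hC₂ : ∀ j : {u : U₂ // u ∈ S₂}, r₂ (y j) (y' j) ≤ C) :
    |t x y - t x' y'| ≤ (E.card : ℝ) * C := by
  classical
  set ν₁ : Measure ({u : U₁ // u ∉ S₁} → J₁) := Measure.pi fun _ => μ₁ with hν₁def
  set ν₂ : Measure ({u : U₂ // u ∉ S₂} → J₂) := Measure.pi fun _ => μ₂ with hν₂def
  -- measurability of extendAssign in the complement variable
  have hext₁ : ∀ (w : {u : U₁ // u ∈ S₁} → J₁) (v : U₁),
      Measurable fun x'' : {u : U₁ // u ∉ S₁} → J₁ => extendAssign S₁ w x'' v := by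
    intro w v
    unfold extendAssign
    by_cases h : v ∈ S₁
    · simp only [dif_pos h]; exact measurable_const
    · simp only [dif_neg h]; exact measurable_pi_apply _
  have hext₂ : ∀ (w : {u : U₂ // u ∈ S₂} → J₂) (v : U₂),
      Measurable fun y'' : {u : U₂ // u ∉ S₂} → J₂ => extendAssign S₂ w y'' v := by
    intro w v
    unfold extendAssign
    by_cases h : v ∈ S₂
    · simp only [dif_pos h]; exact measurable_const
    · simp only [dif_neg h]; exact measurable_pi_apply _
  -- the product integrand
  set F : ({u : U₁ // u ∈ S₁} → J₁) → ({u : U₂ // u ∈ S₂} → J₂) →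
      (({u : U₁ // u ∉ S₁} → J₁) × ({u : U₂ // u ∉ S₂} → J₂)) → ℝ :=
    fun w₁ w₂ p => ∏ e ∈ E, W (extendAssign S₁ w₁ p.1 e.1) (extendAssign S₂ w₂ p.2 e.2)
    with hFdef
  have hFmeas : ∀ w₁ w₂, Measurable (F w₁ w₂) := by
    intro w₁ w₂
    exact Finset.measurable_prod _ fun e _ =>
      hWmeas.comp (((hext₁ w₁ e.1).comp measurable_fst).prodMk
        ((hext₂ w₂ e.2).comp measurable_snd))
  have hF0 : ∀ w₁ w₂ p, 0 ≤ F w₁ w₂ p := fun w₁ w₂ p =>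
    Finset.prod_nonneg fun e _ => hW0 _ _
  have hF1 : ∀ w₁ w₂ p, F w₁ w₂ p ≤ 1 := fun w₁ w₂ p =>
    Finset.prod_le_one (fun e _ => hW0 _ _) (fun e _ => hW1 _ _)
  have hFint : ∀ w₁ w₂, Integrable (F w₁ w₂) (ν₁.prod ν₂) := by
    intro w₁ w₂
    refine ⟨(hFmeas w₁ w₂).aestronglyMeasurable, HasFiniteIntegral.of_bounded (C := 1)
      (Filter.Eventually.of_forall fun p => ?_)⟩
    rw [Real.norm_eq_abs, abs_of_nonneg (hF0 w₁ w₂ p)]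
    exact hF1 w₁ w₂ p
  have hteq : ∀ w₁ w₂, t w₁ w₂ = ∫ p, F w₁ w₂ p ∂(ν₁.prod ν₂) := by
    intro w₁ w₂
    rw [ht w₁ w₂]
    exact (integral_prod _ (hFint w₁ w₂)).symm
  -- the per-edge terms
  set G : (U₁ × U₂) → (({u : U₁ // u ∉ S₁} → J₁) × ({u : U₂ // u ∉ S₂} → J₂)) → ℝ :=
    fun e p => |W (extendAssign S₁ x p.1 e.1) (extendAssign S₂ y p.2 e.2)
      - W (extendAssign S₁ x' p.1 e.1) (extendAssign S₂ y' p.2 e.2)| with hGdef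
  have hGmeas : ∀ e, Measurable (G e) := by
    intro e
    exact ((hWmeas.comp (((hext₁ x e.1).comp measurable_fst).prodMk
      ((hext₂ y e.2).comp measurable_snd))).sub
      (hWmeas.comp (((hext₁ x' e.1).comp measurable_fst).prodMk
      ((hext₂ y' e.2).comp measurable_snd)))).abs
  have hGint : ∀ e, Integrable (G e) (ν₁.prod ν₂) := by
    intro e
    refine ⟨(hGmeas e).aestronglyMeasurable, HasFiniteIntegral.of_bounded (C := 1)
      (Filter.Eventually.of_forall fun p => ?_)⟩
    rw [Real.norm_eq_abs, abs_abs]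
    have h1 := hW0 (extendAssign S₁ x p.1 e.1) (extendAssign S₂ y p.2 e.2)
    have h2 := hW1 (extendAssign S₁ x p.1 e.1) (extendAssign S₂ y p.2 e.2)
    have h3 := hW0 (extendAssign S₁ x' p.1 e.1) (extendAssign S₂ y' p.2 e.2)
    have h4 := hW1 (extendAssign S₁ x' p.1 e.1) (extendAssign S₂ y' p.2 e.2)
    rw [abs_le]
    constructor <;> linarith
  -- the per-edge bound
  have hedge : ∀ e ∈ E, ∫ p, G e p ∂(ν₁.prod ν₂) ≤ C := by
    intro e he
    by_cases h1 : e.1 ∈ S₁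
    · have h2 : e.2 ∉ S₂ := fun h2 => hindep e he ⟨h1, h2⟩
      have hGe : G e = fun p => (fun z => |W (x ⟨e.1, h1⟩) z - W (x' ⟨e.1, h1⟩) z|)
          (p.2 ⟨e.2, h2⟩) := by
        funext p
        simp only [hGdef, extendAssign, dif_pos h1, dif_neg h2]
      rw [hGe]
      set g : J₂ → ℝ := fun z => |W (x ⟨e.1, h1⟩) z - W (x' ⟨e.1, h1⟩) z| with hgdef
      have hgmeas : Measurable g := ((hWmeas.comp (measurable_const.prodMk measurable_id)).sub
        (hWmeas.comp (measurable_const.prodMk measurable_id))).abs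
      have step1 : ∫ p, g (p.2 ⟨e.2, h2⟩) ∂(ν₁.prod ν₂) = ∫ q, g (q ⟨e.2, h2⟩) ∂ν₂ := by
        have := integral_map (φ := Prod.snd) (μ := ν₁.prod ν₂)
          (f := fun q : {u : U₂ // u ∉ S₂} → J₂ => g (q ⟨e.2, h2⟩))
          measurable_snd.aemeasurable
          (hgmeas.comp (measurable_pi_apply _)).aestronglyMeasurable
        rw [Measure.map_snd_prod, measure_univ, one_smul] at this
        exact this.symm
      have step2 : ∫ q, g (q ⟨e.2, h2⟩) ∂ν₂ = ∫ z, g z ∂μ₂ := by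
        have := integral_map (φ := Function.eval (⟨e.2, h2⟩ : {u : U₂ // u ∉ S₂}))
          (μ := ν₂) (f := g) (measurable_pi_apply _).aemeasurable
          (by rw [hν₂def, map_eval_pi_prob]; exact hgmeas.aestronglyMeasurable)
        rw [hν₂def, map_eval_pi_prob] at this
        exact this.symm
      rw [step1, step2, ← hr₁]
      exact hC₁ _
    · by_cases h2 : e.2 ∈ S₂
      · have hGe : G e = fun p => (fun z => |W z (y ⟨e.2, h2⟩) - W z (y' ⟨e.2, h2⟩)|)
            (p.1 ⟨e.1, h1⟩) := by
          funext p
          simp only [hGdef, extendAssign, dif_neg h1, dif_pos h2]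
        rw [hGe]
        set g : J₁ → ℝ := fun z => |W z (y ⟨e.2, h2⟩) - W z (y' ⟨e.2, h2⟩)| with hgdef
        have hgmeas : Measurable g := ((hWmeas.comp (measurable_id.prodMk measurable_const)).sub
          (hWmeas.comp (measurable_id.prodMk measurable_const))).abs
        have step1 : ∫ p, g (p.1 ⟨e.1, h1⟩) ∂(ν₁.prod ν₂) = ∫ q, g (q ⟨e.1, h1⟩) ∂ν₁ := by
          have := integral_map (φ := Prod.fst) (μ := ν₁.prod ν₂)
            (f := fun q : {u : U₁ // u ∉ S₁} → J₁ => g (q ⟨e.1, h1⟩))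
            measurable_fst.aemeasurable
            (hgmeas.comp (measurable_pi_apply _)).aestronglyMeasurable
          rw [Measure.map_fst_prod, measure_univ, one_smul] at this
          exact this.symm
        have step2 : ∫ q, g (q ⟨e.1, h1⟩) ∂ν₁ = ∫ z, g z ∂μ₁ := by
          have := integral_map (φ := Function.eval (⟨e.1, h1⟩ : {u : U₁ // u ∉ S₁}))
            (μ := ν₁) (f := g) (measurable_pi_apply _).aemeasurable
            (by rw [hν₁def, map_eval_pi_prob]; exact hgmeas.aestronglyMeasurable)
          rw [hν₁def, map_eval_pi_prob] at this
          exact this.symm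
        rw [step1, step2, ← hr₂]
        exact hC₂ _
      · have hGe : G e = fun _ => (0 : ℝ) := by
          funext p
          simp only [hGdef, extendAssign, dif_neg h1, dif_neg h2, sub_self, abs_zero]
        rw [hGe, integral_zero]
        exact hC0
  -- main chain
  rw [hteq x y, hteq x' y', ← integral_sub (hFint x y) (hFint x' y')]
  calc |∫ p, (F x y p - F x' y' p) ∂(ν₁.prod ν₂)|
      ≤ ∫ p, |F x y p - F x' y' p| ∂(ν₁.prod ν₂) := by
        simpa [Real.norm_eq_abs] using
          norm_integral_le_integral_norm (μ := ν₁.prod ν₂) (fun p => F x y p - F x' y' p)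
    _ ≤ ∫ p, (∑ e ∈ E, G e p) ∂(ν₁.prod ν₂) := by
        refine integral_mono ((hFint x y).sub (hFint x' y')).abs
          (integrable_finset_sum E fun e _ => hGint e) (fun p => ?_)
        exact abs_prod_sub_prod_le_sum E _ _ (fun e => hW0 _ _) (fun e => hW1 _ _)
          (fun e => hW0 _ _) (fun e => hW1 _ _)
    _ = ∑ e ∈ E, ∫ p, G e p ∂(ν₁.prod ν₂) := integral_finset_sum E fun e _ => hGint e
    _ ≤ ∑ _e ∈ E, C := Finset.sum_le_sum hedge
    _ = (E.card : ℝ) * C := by simp [Finset.sum_const, nsmul_eq_mul]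
end

section
/- Let (J,W) be a pure graphon, F₁,…,F_m graphs whose node sets contain a common set S that is independent in each F_i, T ⊆ S, and a₁,…,a_m real numbers. Fix x ∈ J^T and suppose ∑_{i=1}^m a_i t_S(F_i,W; x,y) = 0 for almost all y ∈ J^{S∖T}. Then the equation holds for all y ∈ J^{S∖T}. -/
open MeasureTheory

/-- Extend an assignment given on (the image of) `S` inside the vertex set,
together with an assignment on the remaining vertices, to all vertices. -/
noncomputable def extendVia {S Vt J : Type*} [Fintype S] [DecidableEq Vt]
    (f : S → Vt) (z : S → J)
    (w : {v : Vt // v ∉ Finset.univ.image f} → J) (v : Vt) : J :=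
  if h : v ∈ Finset.univ.image f then z (Finset.mem_image.mp h).choose
  else w ⟨v, h⟩

/-- Combine an assignment on `T ⊆ S` with an assignment on `S ∖ T`. -/
noncomputable def combineAssign {S J : Type*} [DecidableEq S] (T : Finset S)
    (x : {u : S // u ∈ T} → J) (y : {u : S // u ∉ T} → J) (u : S) : J :=
  if h : u ∈ T then x ⟨u, h⟩ else y ⟨u, h⟩

/-!
Since `S` is independent, every edge of `F` has at most one endpoint in `S`. Moving the root
assignment from `z` to `z'` therefore changes an edge factor `W(z_u, w_j)` into `W(z'_u, w_j)`,
and averaging over the free variable `w_j` costs `r_W(z_u, z'_u) ≤ d(z, z')`. Telescoping over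
the edges makes `t_S(F, W; ·)` Lipschitz, so the relation is a continuous function of `y`; a
continuous function vanishing almost everywhere for a measure of full support vanishes everywhere.
-/

lemma abs_prod_sub_prod_le_sum_abs_sub {α : Type*} (s : Finset α) {p q : α → ℝ}
    (hp0 : ∀ a, 0 ≤ p a) (hp1 : ∀ a, p a ≤ 1) (hq0 : ∀ a, 0 ≤ q a) (hq1 : ∀ a, q a ≤ 1) :
    |∏ a ∈ s, p a - ∏ a ∈ s, q a| ≤ ∑ a ∈ s, |p a - q a| := by
  induction s using Finset.cons_induction with
  | empty => simp
  | cons a s _ ih =>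
    rw [Finset.prod_cons, Finset.prod_cons, Finset.sum_cons]
    have hp : |p a| ≤ 1 := abs_le.mpr ⟨by linarith [hp0 a], hp1 a⟩
    have hq : |∏ b ∈ s, q b| ≤ 1 := by
      rw [abs_of_nonneg (Finset.prod_nonneg fun b _ => hq0 b)]
      exact Finset.prod_le_one (fun b _ => hq0 b) (fun b _ => hq1 b)
    calc |p a * ∏ b ∈ s, p b - q a * ∏ b ∈ s, q b|
        = |p a * (∏ b ∈ s, p b - ∏ b ∈ s, q b) + (p a - q a) * ∏ b ∈ s, q b| := by ring_nf
      _ ≤ |p a| * |∏ b ∈ s, p b - ∏ b ∈ s, q b| + |p a - q a| * |∏ b ∈ s, q b| := by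
          rw [← abs_mul, ← abs_mul]; exact abs_add_le _ _
      _ ≤ 1 * ∑ b ∈ s, |p b - q b| + |p a - q a| * 1 := by gcongr
      _ = |p a - q a| + ∑ b ∈ s, |p b - q b| := by ring

lemma integrable_of_measurable_of_mem_Icc {α : Type*} [MeasurableSpace α] {ν : Measure α}
    [IsFiniteMeasure ν] {g : α → ℝ} (hg : Measurable g) (hg0 : ∀ a, 0 ≤ g a)
    (hg1 : ∀ a, g a ≤ 1) : Integrable g ν :=
  .of_bound hg.aestronglyMeasurable 1 <| ae_of_all _ fun a =>
    (Real.norm_of_nonneg (hg0 a)).trans_le (hg1 a)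

lemma lipschitzWith_combineAssign {S J : Type*} [Fintype S] [DecidableEq S]
    [PseudoMetricSpace J] (T : Finset S) (x : {u : S // u ∈ T} → J) :
    LipschitzWith 1 (combineAssign T x) := by
  refine LipschitzWith.of_dist_le_mul fun y y' => ?_
  rw [NNReal.coe_one, one_mul, dist_pi_le_iff dist_nonneg]
  intro u
  by_cases hu : u ∈ T
  · simp only [combineAssign, dif_pos hu, dist_self, dist_nonneg]
  · simp only [combineAssign, dif_neg hu]
    exact dist_le_pi_dist y y' ⟨u, hu⟩

lemma integral_abs_sub_comp_eval_le {ι J : Type*} [Fintype ι] [PseudoMetricSpace J]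
    [MeasurableSpace J] {μ : Measure J} [IsProbabilityMeasure μ] {W : J → J → ℝ}
    (hW : Measurable (Function.uncurry W)) (hdist : ∀ x y, ∫ t, |W x t - W y t| ∂μ ≤ dist x y) (j : ι) (a b : J) :
    ∫ w : ι → J, |W a (w j) - W b (w j)| ∂(Measure.pi fun _ => μ) ≤ dist a b := by
  have hWa : ∀ c, Measurable (W c) := fun c => hW.comp measurable_prodMk_left
  calc ∫ w : ι → J, |W a (w j) - W b (w j)| ∂(Measure.pi fun _ => μ)
      = ∫ t, |W a t - W b t| ∂μ :=
        integral_comp_eval (μ := fun _ => μ) (f := fun t => |W a t - W b t|)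
          ((hWa a).sub (hWa b)).abs.aestronglyMeasurable
    _ ≤ dist a b := hdist a b

section PartialHomDensity

variable {S V J : Type*} [Fintype S] [DecidableEq V] {W : J → J → ℝ} {f : S → V}

noncomputable def edgeWeight (W : J → J → ℝ) (f : S → V) (z : S → J)
    (w : {v : V // v ∉ Finset.univ.image f} → J) (e : V × V) : ℝ :=
  W (extendVia f z w e.1) (extendVia f z w e.2)

lemma edgeWeight_swap (hWsymm : ∀ x y, W x y = W y x) (z : S → J) (w) (e : V × V) :
    edgeWeight W f z w e.swap = edgeWeight W f z w e :=
  hWsymm _ _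

variable [MeasurableSpace J]

lemma measurable_extendVia_apply (z : S → J) (v : V) :
    Measurable fun w : {v : V // v ∉ Finset.univ.image f} → J => extendVia f z w v := by
  unfold extendVia
  split_ifs
  exacts [measurable_const, measurable_pi_apply _]

lemma measurable_edgeWeight (hW : Measurable (Function.uncurry W)) (z : S → J) (e : V × V) :
    Measurable fun w => edgeWeight W f z w e :=
  hW.comp ((measurable_extendVia_apply z e.1).prodMk (measurable_extendVia_apply z e.2))

variable [Fintype V]

/-- `t_S(F, W; z)` for the graph `F = (V, E)` whose copy of `S` is the image of `f`. -/
noncomputable def partialHomDensity (μ : Measure J) (W : J → J → ℝ) (E : Finset (V × V))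
    (f : S → V) (z : S → J) : ℝ :=
  ∫ w, ∏ e ∈ E, edgeWeight W f z w e ∂(Measure.pi fun _ => μ)

variable {μ : Measure J} [PseudoMetricSpace J] [IsProbabilityMeasure μ]

lemma integral_abs_sub_edgeWeight_le (hW : Measurable (Function.uncurry W))
    (hWsymm : ∀ x y, W x y = W y x) (hdist : ∀ x y, ∫ t, |W x t - W y t| ∂μ ≤ dist x y)
    {e : V × V} (he : ¬(e.1 ∈ Finset.univ.image f ∧ e.2 ∈ Finset.univ.image f))
    (z z' : S → J) :
    ∫ w, |edgeWeight W f z w e - edgeWeight W f z' w e| ∂(Measure.pi fun _ => μ)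
      ≤ dist z z' := by
  wlog h₁ : e.1 ∈ Finset.univ.image f generalizing e
  · by_cases h₂ : e.2 ∈ Finset.univ.image f
    · simpa only [edgeWeight_swap hWsymm] using this (e := e.swap) (by tauto) h₂
    · simp only [edgeWeight, extendVia, dif_neg h₁, dif_neg h₂, sub_self, abs_zero,
        integral_zero, dist_nonneg]
  have h₂ : e.2 ∉ Finset.univ.image f := fun h₂ => he ⟨h₁, h₂⟩
  set u := (Finset.mem_image.mp h₁).choose
  set j : {v : V // v ∉ Finset.univ.image f} := ⟨e.2, h₂⟩
  calc ∫ w, |edgeWeight W f z w e - edgeWeight W f z' w e| ∂(Measure.pi fun _ => μ)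
      = ∫ w, |W (z u) (w j) - W (z' u) (w j)| ∂(Measure.pi fun _ => μ) := by
        simp only [edgeWeight, extendVia, dif_pos h₁, dif_neg h₂, u, j]
    _ ≤ dist (z u) (z' u) := integral_abs_sub_comp_eval_le hW hdist _ _ _
    _ ≤ dist z z' := dist_le_pi_dist z z' u

theorem lipschitzWith_partialHomDensity (hW : Measurable (Function.uncurry W))
    (hWsymm : ∀ x y, W x y = W y x) (hW0 : ∀ x y, 0 ≤ W x y) (hW1 : ∀ x y, W x y ≤ 1)
    (hdist : ∀ x y, ∫ t, |W x t - W y t| ∂μ ≤ dist x y) {E : Finset (V × V)}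
    (hindep : ∀ e ∈ E, ¬(e.1 ∈ Finset.univ.image f ∧ e.2 ∈ Finset.univ.image f)) :
    LipschitzWith E.card (partialHomDensity μ W E f) := by
  have hedge : ∀ z e, Integrable (fun w => edgeWeight W f z w e) (Measure.pi fun _ => μ) :=
    fun z e => integrable_of_measurable_of_mem_Icc (measurable_edgeWeight hW z e)
      (fun _ => hW0 _ _) (fun _ => hW1 _ _)
  have hprod : ∀ z, Integrable (fun w => ∏ e ∈ E, edgeWeight W f z w e)
      (Measure.pi fun _ => μ) :=
    fun z => integrable_of_measurable_of_mem_Icc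
      (Finset.measurable_prod _ fun e _ => measurable_edgeWeight hW z e)
      (fun _ => Finset.prod_nonneg fun _ _ => hW0 _ _)
      (fun _ => Finset.prod_le_one (fun _ _ => hW0 _ _) (fun _ _ => hW1 _ _))
  refine LipschitzWith.of_dist_le_mul fun z z' => ?_
  rw [Real.dist_eq, partialHomDensity, partialHomDensity, ← integral_sub (hprod z) (hprod z')]
  calc |∫ w, (∏ e ∈ E, edgeWeight W f z w e - ∏ e ∈ E, edgeWeight W f z' w e)
        ∂(Measure.pi fun _ => μ)|
      ≤ ∫ w, |∏ e ∈ E, edgeWeight W f z w e - ∏ e ∈ E, edgeWeight W f z' w e|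
        ∂(Measure.pi fun _ => μ) := abs_integral_le_integral_abs
    _ ≤ ∫ w, ∑ e ∈ E, |edgeWeight W f z w e - edgeWeight W f z' w e|
        ∂(Measure.pi fun _ => μ) :=
        integral_mono ((hprod z).sub (hprod z')).abs
          (integrable_finsetSum _ fun e _ => ((hedge z e).sub (hedge z' e)).abs) fun w =>
          abs_prod_sub_prod_le_sum_abs_sub E (fun _ => hW0 _ _) (fun _ => hW1 _ _)
            (fun _ => hW0 _ _) (fun _ => hW1 _ _)
    _ = ∑ e ∈ E, ∫ w, |edgeWeight W f z w e - edgeWeight W f z' w e|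
        ∂(Measure.pi fun _ => μ) :=
        integral_finsetSum _ fun e _ => ((hedge z e).sub (hedge z' e)).abs
    _ ≤ ∑ _e ∈ E, dist z z' := Finset.sum_le_sum fun e he =>
        integral_abs_sub_edgeWeight_le hW hWsymm hdist (hindep e he) z z'
    _ = E.card * dist z z' := by rw [Finset.sum_const, nsmul_eq_mul]

end PartialHomDensity

theorem derandomize_density_relation_general
    {J : Type*} [MetricSpace J] [MeasurableSpace J]
    (μ : Measure J) [IsProbabilityMeasure μ] [μ.IsOpenPosMeasure]
    (W : J → J → ℝ)
    (hWmeas : Measurable (fun p : J × J => W p.1 p.2))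
    (hWsymm : ∀ x y, W x y = W y x)
    (hW0 : ∀ x y, 0 ≤ W x y) (hW1 : ∀ x y, W x y ≤ 1)
    (hdist : ∀ x y : J, dist x y = ∫ z, |W x z - W y z| ∂μ)
    {m : ℕ} {S : Type*} [Fintype S] [DecidableEq S]
    {V : Fin m → Type*} [∀ i, Fintype (V i)] [∀ i, DecidableEq (V i)]
    (E : ∀ i, Finset (V i × V i))
    (s : ∀ i, S → V i)
    (hindep : ∀ i, ∀ e ∈ E i,
      ¬(e.1 ∈ Finset.univ.image (s i) ∧ e.2 ∈ Finset.univ.image (s i)))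
    (a : Fin m → ℝ)
    (tS : Fin m → (S → J) → ℝ)
    (htS : ∀ i z, tS i z =
      ∫ w : {v : V i // v ∉ Finset.univ.image (s i)} → J,
        (∏ e ∈ E i, W (extendVia (s i) z w e.1) (extendVia (s i) z w e.2))
          ∂(Measure.pi fun _ => μ))
    (T : Finset S) (x : {u : S // u ∈ T} → J)
    (hae : ∀ᵐ y ∂(Measure.pi fun _ : {u : S // u ∉ T} => μ),
      ∑ i, a i * tS i (combineAssign T x y) = 0) :
    ∀ y : {u : S // u ∉ T} → J, ∑ i, a i * tS i (combineAssign T x y) = 0 := by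
  have hrelation : Continuous fun y => ∑ i, a i * tS i (combineAssign T x y) := by
    refine continuous_finsetSum _ fun i _ => continuous_const.mul ?_
    rw [show tS i = partialHomDensity μ W (E i) (s i) from funext (htS i)]
    exact ((lipschitzWith_partialHomDensity hWmeas hWsymm hW0 hW1 (fun x y => (hdist x y).ge)
      (hindep i)).comp (lipschitzWith_combineAssign T x)).continuous
  exact congrFun ((hrelation.ae_eq_iff_eq _ continuous_const).mp hae)

/-- Corollary: for a pure graphon `(J,W)`, graphs `F₁,…,F_m` containing a
common independent set `S`, `T ⊆ S` and reals `a₁,…,a_m`, if for a fixed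
`x ∈ J^T` the linear relation `∑ aᵢ t_S(Fᵢ,W;x,y) = 0` holds for almost all
`y ∈ J^{S∖T}`, then it holds for all `y`. -/
theorem derandomize_density_relation
    {J : Type*} [MetricSpace J] [CompleteSpace J] [TopologicalSpace.SeparableSpace J]
    [MeasurableSpace J] [BorelSpace J]
    (μ : Measure J) [IsProbabilityMeasure μ] [μ.IsOpenPosMeasure]
    (W : J → J → ℝ)
    (hWmeas : Measurable (fun p : J × J => W p.1 p.2))
    (hWsymm : ∀ x y, W x y = W y x)
    (hW0 : ∀ x y, 0 ≤ W x y) (hW1 : ∀ x y, W x y ≤ 1)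
    (hdist : ∀ x y : J, dist x y = ∫ z, |W x z - W y z| ∂μ)
    {m : ℕ} {S : Type*} [Fintype S] [DecidableEq S]
    {V : Fin m → Type*} [∀ i, Fintype (V i)] [∀ i, DecidableEq (V i)]
    (E : ∀ i, Finset (V i × V i))
    (s : ∀ i, S → V i) (hs : ∀ i, Function.Injective (s i))
    (hindep : ∀ i, ∀ e ∈ E i,
      ¬(e.1 ∈ Finset.univ.image (s i) ∧ e.2 ∈ Finset.univ.image (s i)))
    (a : Fin m → ℝ)
    (tS : Fin m → (S → J) → ℝ)
    (htS : ∀ i z, tS i z =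
      ∫ w : {v : V i // v ∉ Finset.univ.image (s i)} → J,
        (∏ e ∈ E i, W (extendVia (s i) z w e.1) (extendVia (s i) z w e.2))
          ∂(Measure.pi fun _ => μ))
    (T : Finset S) (x : {u : S // u ∈ T} → J)
    (hae : ∀ᵐ y ∂(Measure.pi fun _ : {u : S // u ∉ T} => μ),
      ∑ i, a i * tS i (combineAssign T x y) = 0) :
    ∀ y : {u : S // u ∉ T} → J, ∑ i, a i * tS i (combineAssign T x y) = 0 :=
  derandomize_density_relation_general μ W hWmeas hWsymm hW0 hW1 hdist E s hindep a tS htS T x hae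
end

section
/- Let (J,W) be a pure graphon. Then the similarity distance r_{W∘W}(a,b) = ∫_J |∫_J W(x,y)(W(y,a) − W(y,b)) dy| dx is a metric on J; in particular, r_{W∘W}(x,y) = 0 implies x = y. -/
open MeasureTheory

/-- For a pure graphon `(J,W)`, the similarity distance
`r_{W∘W}(a,b) = ∫ |∫ W(x,y)(W(y,a) − W(y,b)) dy| dx` is a metric; in
particular `r_{W∘W}(x,y) = 0` implies `x = y`. -/
theorem similarity_distance_is_metric
    {J : Type*} [MetricSpace J] [CompleteSpace J] [TopologicalSpace.SeparableSpace J]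
    [MeasurableSpace J] [BorelSpace J]
    (μ : Measure J) [IsProbabilityMeasure μ] [μ.IsOpenPosMeasure]
    (W : J → J → ℝ)
    (hWmeas : Measurable (fun p : J × J => W p.1 p.2))
    (hWsymm : ∀ x y, W x y = W y x)
    (hW0 : ∀ x y, 0 ≤ W x y) (hW1 : ∀ x y, W x y ≤ 1)
    (hdist : ∀ x y : J, dist x y = ∫ z, |W x z - W y z| ∂μ)
    (simdist : J → J → ℝ)
    (hsim : ∀ a b, simdist a b = ∫ x, |∫ y, W x y * (W y a - W y b) ∂μ| ∂μ) :
    (∀ x y, 0 ≤ simdist x y) ∧ (∀ x y, simdist x y = simdist y x) ∧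
      (∀ x, simdist x x = 0) ∧
      (∀ x y z, simdist x z ≤ simdist x y + simdist y z) ∧
      (∀ x y, simdist x y = 0 → x = y) := by
  -- basic measurability
  have measW1 : ∀ x : J, Measurable (fun y => W x y) := fun x =>
    hWmeas.comp (measurable_const.prodMk measurable_id)
  have measW2 : ∀ a : J, Measurable (fun y => W y a) := fun a =>
    hWmeas.comp (measurable_id.prodMk measurable_const)
  have habsW : ∀ x y : J, |W x y| ≤ 1 := fun x y =>
    abs_le.2 ⟨by linarith [hW0 x y], hW1 x y⟩
  have habsf : ∀ a b y : J, |W y a - W y b| ≤ 1 := by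
    intro a b y
    have h1 := hW0 y a; have h2 := hW1 y a; have h3 := hW0 y b; have h4 := hW1 y b
    rw [abs_le]; constructor <;> linarith
  -- integrability of a bounded measurable function
  have hbdd_int : ∀ (g : J → ℝ), Measurable g → (∀ y, |g y| ≤ 2) → Integrable g μ := by
    intro g hg hb
    refine (integrable_const (2:ℝ)).mono' hg.aestronglyMeasurable ?_
    exact ae_of_all _ fun y => by simpa [Real.norm_eq_abs] using hb y
  have hint : ∀ x a b : J, Integrable (fun y => W x y * (W y a - W y b)) μ := by
    intro x a b
    refine hbdd_int _ ((measW1 x).mul ((measW2 a).sub (measW2 b))) fun y => ?_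
    calc |W x y * (W y a - W y b)| = |W x y| * |W y a - W y b| := abs_mul _ _
      _ ≤ 1 * 1 := mul_le_mul (habsW x y) (habsf a b y) (abs_nonneg _) one_pos.le
      _ ≤ 2 := by norm_num
  have habs_int_le : ∀ g : J → ℝ, |∫ y, g y ∂μ| ≤ ∫ y, |g y| ∂μ := fun g => by
    simpa [Real.norm_eq_abs] using norm_integral_le_integral_norm (μ := μ) g
  set F : J → J → J → ℝ := fun a b x => ∫ y, W x y * (W y a - W y b) ∂μ with hF
  have hFbdd : ∀ a b x, |F a b x| ≤ 1 := by
    intro a b x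
    calc |F a b x| ≤ ∫ y, |W x y * (W y a - W y b)| ∂μ :=
          habs_int_le _
      _ ≤ ∫ _y, (1:ℝ) ∂μ := by
          refine integral_mono (hint x a b).abs (integrable_const 1) fun y => ?_
          calc |W x y * (W y a - W y b)| = |W x y| * |W y a - W y b| := abs_mul _ _
            _ ≤ 1 * 1 := mul_le_mul (habsW x y) (habsf a b y) (abs_nonneg _) one_pos.le
            _ = 1 := by norm_num
      _ = 1 := by simp
  have hFmeas : ∀ a b, StronglyMeasurable (F a b) := by
    intro a b
    have : StronglyMeasurable fun p : J × J => W p.1 p.2 * (W p.2 a - W p.2 b) := by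
      refine Measurable.stronglyMeasurable ?_
      exact hWmeas.mul (((hWmeas.comp (measurable_snd.prodMk measurable_const)).sub
        (hWmeas.comp (measurable_snd.prodMk measurable_const))))
    exact this.integral_prod_right'
  have hFint : ∀ a b, Integrable (F a b) μ :=
    fun a b => hbdd_int _ (hFmeas a b).measurable fun x => (hFbdd a b x).trans (by norm_num)
  have hFintabs : ∀ a b, Integrable (fun x => |F a b x|) μ := fun a b => (hFint a b).abs
  -- F is 1-Lipschitz, hence continuous
  have hFcont : ∀ a b, Continuous (F a b) := by
    intro a b
    refine (LipschitzWith.of_dist_le_mul (K := 1) fun x x' => ?_).continuous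
    rw [Real.dist_eq, NNReal.coe_one, one_mul]
    have hsub : F a b x - F a b x' = ∫ y, (W x y - W x' y) * (W y a - W y b) ∂μ := by
      simp only [hF]
      rw [← integral_sub (hint x a b) (hint x' a b)]
      congr 1; funext y; ring
    rw [hsub]
    calc |∫ y, (W x y - W x' y) * (W y a - W y b) ∂μ|
        ≤ ∫ y, |(W x y - W x' y) * (W y a - W y b)| ∂μ := habs_int_le _
      _ ≤ ∫ y, |W x y - W x' y| ∂μ := by
          refine integral_mono ?_ ?_ fun y => ?_
          · exact (((hint x a b).sub (hint x' a b)).congr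
              (ae_of_all _ fun y => by simp only [Pi.sub_apply]; ring)).abs
          · exact hbdd_int _ ((measW1 x).sub (measW1 x')).abs fun y => by
              have := habsW x y; have := habsW x' y
              rw [abs_abs, abs_sub_le_iff] at *
              constructor <;> [skip; skip] <;>
                cases' abs_le.mp (habsW x y) with h1 h2 <;>
                cases' abs_le.mp (habsW x' y) with h3 h4 <;> linarith
          · calc |(W x y - W x' y) * (W y a - W y b)|
                = |W x y - W x' y| * |W y a - W y b| := abs_mul _ _
              _ ≤ |W x y - W x' y| * 1 :=
                  mul_le_mul_of_nonneg_left (habsf a b y) (abs_nonneg _)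
              _ = |W x y - W x' y| := mul_one _
      _ = dist x x' := (hdist x x').symm
  refine ⟨?_, ?_, ?_, ?_, ?_⟩
  · -- nonneg
    intro x y
    rw [hsim]
    exact integral_nonneg fun z => abs_nonneg _
  · -- symmetry
    intro x y
    rw [hsim, hsim]
    congr 1; funext z
    rw [show (∫ t, W z t * (W t y - W t x) ∂μ) = -∫ t, W z t * (W t x - W t y) ∂μ by
      rw [← integral_neg]; congr 1; funext t; ring, abs_neg]
  · -- self
    intro x
    rw [hsim]
    simp
  · -- triangle
    intro x y z
    rw [hsim, hsim, hsim]
    have hdecomp : ∀ t, F x z t = F x y t + F y z t := by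
      intro t
      simp only [hF]
      rw [← integral_add (hint t x y) (hint t y z)]
      congr 1; funext s; ring
    calc (∫ t, |∫ s, W t s * (W s x - W s z) ∂μ| ∂μ)
        = ∫ t, |F x z t| ∂μ := rfl
      _ ≤ ∫ t, (|F x y t| + |F y z t|) ∂μ := by
          refine integral_mono (hFintabs x z) ((hFintabs x y).add (hFintabs y z)) fun t => ?_
          rw [hdecomp t]; exact abs_add_le _ _
      _ = (∫ t, |F x y t| ∂μ) + ∫ t, |F y z t| ∂μ :=
          integral_add (hFintabs x y) (hFintabs y z)
      _ = _ := rfl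
  · -- zero implies eq
    intro a b hab
    rw [hsim] at hab
    have hae : ∀ᵐ x ∂μ, |F a b x| = 0 := by
      have := (integral_eq_zero_iff_of_nonneg (fun x => abs_nonneg (F a b x))
        (hFintabs a b)).mp hab
      filter_upwards [this.le] with x hx using le_antisymm hx (abs_nonneg _)
    -- the zero set is closed and conull, hence everything by full support
    have hall : ∀ x, F a b x = 0 := by
      by_contra h
      push_neg at h
      obtain ⟨x₀, hx₀⟩ := h
      set U : Set J := {x | F a b x ≠ 0} with hU
      have hUopen : IsOpen U := by
        have : U = (F a b) ⁻¹' ({0}ᶜ) := rfl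
        rw [this]
        exact (isClosed_singleton.preimage (hFcont a b)).isOpen_compl
      have hUnull : μ U = 0 := by
        have : ∀ᵐ x ∂μ, F a b x = 0 := by
          filter_upwards [hae] with x hx using abs_eq_zero.mp hx
        exact this
      exact absurd hUnull (hUopen.measure_pos μ ⟨x₀, hx₀⟩).ne'
    -- evaluate at a and b
    have hsq : (∫ y, (W y a - W y b) ^ 2 ∂μ) = 0 := by
      have h1 : F a b a = 0 := hall a
      have h2 : F a b b = 0 := hall b
      have hsub : F a b a - F a b b = ∫ y, (W y a - W y b) ^ 2 ∂μ := by
        simp only [hF]; rw [← integral_sub (hint a a b) (hint b a b)]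
        congr 1; funext y
        rw [hWsymm a y, hWsymm b y]; ring
      rw [h1, h2, sub_zero] at hsub
      exact hsub.symm
    have hsqint : Integrable (fun y => (W y a - W y b) ^ 2) μ := by
      refine hbdd_int _ (((measW2 a).sub (measW2 b)).pow_const 2) fun y => ?_
      have := habsf a b y
      rw [abs_pow]
      calc |W y a - W y b| ^ 2 ≤ 1 ^ 2 := pow_le_pow_left₀ (abs_nonneg _) this 2
        _ ≤ 2 := by norm_num
    have hfae : ∀ᵐ y ∂μ, (W y a - W y b) ^ 2 = 0 := by
      have := (integral_eq_zero_iff_of_nonneg (fun y => sq_nonneg (W y a - W y b))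
        hsqint).mp hsq
      filter_upwards [this.le] with y hy using le_antisymm hy (sq_nonneg _)
    have : dist a b = 0 := by
      rw [hdist]
      rw [show (0:ℝ) = ∫ _z, (0:ℝ) ∂μ by simp]
      refine integral_congr_ae ?_
      filter_upwards [hfae] with z hz
      have h0 : W z a - W z b = 0 := sq_eq_zero_iff.mp hz
      rw [hWsymm a z, hWsymm b z, h0, abs_zero]
    exact eq_of_dist_eq_zero this
end

section
/- Let (J,W) be a pure graphon and suppose a sequence of points x_n ∈ J converges to x ∈ J in the weak topology, i.e., ∫_A W(x_n,y) dy → ∫_A W(x,y) dy for every measurable set A ⊆ J. Then r_{W∘W}(x_n, x) → 0. -/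
open MeasureTheory Filter

set_option synthInstance.maxHeartbeats 1000000
set_option maxHeartbeats 1000000

/-- For a pure graphon `(J,W)`, if a sequence `xₙ` converges to `x` in the weak
topology (i.e. `∫_A W(xₙ,y) dy → ∫_A W(x,y) dy` for every measurable `A`),
then `r_{W∘W}(xₙ, x) → 0`. -/
theorem similarity_tendsto_of_weak_convergence
    {J : Type*} [MetricSpace J] [CompleteSpace J] [TopologicalSpace.SeparableSpace J]
    [MeasurableSpace J] [BorelSpace J]
    (μ : Measure J) [IsProbabilityMeasure μ] [μ.IsOpenPosMeasure]
    (W : J → J → ℝ)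
    (hWmeas : Measurable (fun p : J × J => W p.1 p.2))
    (hWsymm : ∀ x y, W x y = W y x)
    (hW0 : ∀ x y, 0 ≤ W x y) (hW1 : ∀ x y, W x y ≤ 1)
    (hdist : ∀ x y : J, dist x y = ∫ z, |W x z - W y z| ∂μ)
    (x : ℕ → J) (x₀ : J)
    (hweak : ∀ A : Set J, MeasurableSet A →
      Tendsto (fun n => ∫ y in A, W (x n) y ∂μ) atTop
        (nhds (∫ y in A, W x₀ y ∂μ))) :
    Tendsto (fun n => ∫ u, |∫ y, W u y * (W y (x n) - W y x₀) ∂μ| ∂μ)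
      atTop (nhds 0) := by
  have hWb : ∀ a b : J, ‖W a b‖ ≤ 1 := fun a b => by
    rw [Real.norm_eq_abs, abs_le]; exact ⟨by linarith [hW0 a b], hW1 a b⟩
  have hWm1 : ∀ a : J, Measurable (fun y => W a y) :=
    fun a => hWmeas.comp (measurable_prodMk_left)
  have hWint : ∀ a : J, Integrable (fun y => W a y) μ :=
    fun a => Integrable.mono' (integrable_const 1) (hWm1 a).aestronglyMeasurable
      (Filter.Eventually.of_forall fun y => hWb a y)
  -- integrability of `f * W a`
  have hint : ∀ (f : J → ℝ), Integrable f μ → ∀ a : J,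
      Integrable (fun y => f y * W a y) μ := by
    intro f hf a
    refine Integrable.mono' hf.abs
      (hf.aestronglyMeasurable.mul (hWm1 a).aestronglyMeasurable)
      (Filter.Eventually.of_forall fun y => ?_)
    rw [norm_mul]
    calc ‖f y‖ * ‖W a y‖ ≤ ‖f y‖ * 1 :=
          mul_le_mul_of_nonneg_left (hWb a y) (norm_nonneg _)
      _ = |f y| := by rw [mul_one, Real.norm_eq_abs]
  -- the key bound : |∫ f·W a - ∫ g·W a| ≤ ∫ |f - g|
  have hkeybound : ∀ (f g : J → ℝ), Integrable f μ → Integrable g μ → ∀ a : J,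
      |(∫ y, f y * W a y ∂μ) - ∫ y, g y * W a y ∂μ| ≤ ∫ y, |f y - g y| ∂μ := by
    intro f g hf hg a
    rw [← integral_sub (hint f hf a) (hint g hg a)]
    rw [show |∫ y, (f y * W a y - g y * W a y) ∂μ| =
        ‖∫ y, (f y * W a y - g y * W a y) ∂μ‖ from (Real.norm_eq_abs _).symm]
    refine norm_integral_le_of_norm_le (hf.sub hg).abs
      (Filter.Eventually.of_forall fun y => ?_)
    have : f y * W a y - g y * W a y = (f y - g y) * W a y := by ring
    rw [this, norm_mul]
    calc ‖f y - g y‖ * ‖W a y‖ ≤ ‖f y - g y‖ * 1 :=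
          mul_le_mul_of_nonneg_left (hWb a y) (norm_nonneg _)
      _ = |f y - g y| := by rw [mul_one, Real.norm_eq_abs]
  -- key lemma : weak convergence tested against any integrable f
  have key : ∀ (f : J → ℝ), Integrable f μ →
      Tendsto (fun n => ∫ y, f y * W (x n) y ∂μ) atTop
        (nhds (∫ y, f y * W x₀ y ∂μ)) := by
    refine Integrable.induction (μ := μ)
      (P := fun f => Tendsto (fun n => ∫ y, f y * W (x n) y ∂μ) atTop
        (nhds (∫ y, f y * W x₀ y ∂μ))) ?_ ?_ ?_ ?_
    · intro c s hs _
      have h1 : ∀ a : J, (∫ y, s.indicator (fun _ => c) y * W a y ∂μ)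
          = c * ∫ y in s, W a y ∂μ := by
        intro a
        rw [← integral_indicator hs, ← integral_const_mul]
        congr 1; ext y
        by_cases hy : y ∈ s <;> simp [hy]
      simp_rw [h1]
      exact (hweak s hs).const_mul c
    · intro f g _ hfi hgi hPf hPg
      have h1 : ∀ a : J, (∫ y, (f + g) y * W a y ∂μ)
          = (∫ y, f y * W a y ∂μ) + ∫ y, g y * W a y ∂μ := by
        intro a
        rw [← integral_add (hint f hfi a) (hint g hgi a)]
        congr 1; ext y; simp [add_mul]
      simp_rw [h1]
      exact hPf.add hPg
    · -- closedness in L¹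
      refine IsSeqClosed.isClosed ?_
      intro u p hu hup
      simp only [Set.mem_setOf_eq] at hu
      show Tendsto (fun n => ∫ y, (p : J → ℝ) y * W (x n) y ∂μ) atTop
        (nhds (∫ y, (p : J → ℝ) y * W x₀ y ∂μ))
      rw [Metric.tendsto_atTop]
      intro ε hε
      obtain ⟨k, hk⟩ : ∃ k, dist (u k) p < ε / 3 := by
        obtain ⟨N, hN⟩ := (Metric.tendsto_atTop.mp hup) (ε / 3) (by linarith)
        exact ⟨N, hN N le_rfl⟩
      have hdk : dist (u k) p = ∫ y, |(u k : J → ℝ) y - (p : J → ℝ) y| ∂μ := by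
        rw [MeasureTheory.L1.dist_eq_integral_dist]
        exact integral_congr_ae (Filter.Eventually.of_forall fun y => Real.dist_eq _ _)
      have hdk' : ∫ y, |(u k : J → ℝ) y - (p : J → ℝ) y| ∂μ < ε / 3 := hdk ▸ hk
      have hpi : Integrable (p : J → ℝ) μ := L1.integrable_coeFn p
      have hki : Integrable (u k : J → ℝ) μ := L1.integrable_coeFn (u k)
      obtain ⟨N, hN⟩ := (Metric.tendsto_atTop.mp (hu k)) (ε / 3) (by linarith)
      refine ⟨N, fun n hn => ?_⟩
      have h1 := hkeybound (p : J → ℝ) (u k : J → ℝ) hpi hki (x n)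
      have h2 := hkeybound (u k : J → ℝ) (p : J → ℝ) hki hpi x₀
      have h3 := hN n hn
      rw [Real.dist_eq] at h3 ⊢
      have hsymm : (∫ y, |(p : J → ℝ) y - (u k : J → ℝ) y| ∂μ)
          = ∫ y, |(u k : J → ℝ) y - (p : J → ℝ) y| ∂μ := by
        congr 1; ext y; rw [abs_sub_comm]
      calc |(∫ y, (p : J → ℝ) y * W (x n) y ∂μ) - ∫ y, (p : J → ℝ) y * W x₀ y ∂μ|
          ≤ |(∫ y, (p : J → ℝ) y * W (x n) y ∂μ) - ∫ y, (u k : J → ℝ) y * W (x n) y ∂μ|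
            + |(∫ y, (u k : J → ℝ) y * W (x n) y ∂μ) - ∫ y, (u k : J → ℝ) y * W x₀ y ∂μ|
            + |(∫ y, (u k : J → ℝ) y * W x₀ y ∂μ) - ∫ y, (p : J → ℝ) y * W x₀ y ∂μ| := by
              have h1' := abs_sub_le (∫ y, (p : J → ℝ) y * W (x n) y ∂μ)
                (∫ y, (u k : J → ℝ) y * W (x n) y ∂μ) (∫ y, (p : J → ℝ) y * W x₀ y ∂μ)
              have h2' := abs_sub_le (∫ y, (u k : J → ℝ) y * W (x n) y ∂μ)
                (∫ y, (u k : J → ℝ) y * W x₀ y ∂μ) (∫ y, (p : J → ℝ) y * W x₀ y ∂μ)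
              linarith
        _ < ε / 3 + ε / 3 + ε / 3 := by
            refine add_lt_add (add_lt_add ?_ h3) ?_
            · exact lt_of_le_of_lt (hsymm ▸ h1) hdk'
            · exact lt_of_le_of_lt h2 hdk'
        _ = ε := by ring
    · intro f g hfg hfi hPf
      have h1 : ∀ a : J, (∫ y, f y * W a y ∂μ) = ∫ y, g y * W a y ∂μ := fun a =>
        integral_congr_ae (hfg.mono fun y hy => by dsimp only; rw [hy])
      simpa [h1] using hPf
  -- pointwise convergence of the inner integral
  have hpt : ∀ u : J, Tendsto (fun n => ∫ y, W u y * (W y (x n) - W y x₀) ∂μ)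
      atTop (nhds 0) := by
    intro u
    have h1 : ∀ a : J, (∫ y, W u y * (W y a - W y x₀) ∂μ)
        = (∫ y, W u y * W a y ∂μ) - ∫ y, W u y * W x₀ y ∂μ := by
      intro a
      rw [← integral_sub (hint _ (hWint u) a) (hint _ (hWint u) x₀)]
      congr 1; ext y
      rw [hWsymm y a, hWsymm y x₀]; ring
    simp_rw [h1]
    have := (key (fun y => W u y) (hWint u)).sub
      (tendsto_const_nhds (x := ∫ y, W u y * W x₀ y ∂μ) (f := atTop))
    simpa using this
  -- dominated convergence for the outer integral
  have hmeasn : ∀ n, AEStronglyMeasurable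
      (fun u => |∫ y, W u y * (W y (x n) - W y x₀) ∂μ|) μ := by
    intro n
    have hm : StronglyMeasurable (fun p : J × J =>
        W p.1 p.2 * (W p.2 (x n) - W p.2 x₀)) := by
      refine Measurable.stronglyMeasurable ?_
      exact hWmeas.mul (((hWmeas.comp (measurable_snd.prodMk measurable_const)).sub
        (hWmeas.comp (measurable_snd.prodMk measurable_const))))
    exact ((hm.integral_prod_right').measurable.abs).aestronglyMeasurable
  have hmain : Tendsto (fun n => ∫ u, |∫ y, W u y * (W y (x n) - W y x₀) ∂μ| ∂μ)
      atTop (nhds (∫ _ : J, (0:ℝ) ∂μ)) := by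
    refine tendsto_integral_of_dominated_convergence (fun _ => (2:ℝ)) hmeasn
      (integrable_const 2) (fun n => Filter.Eventually.of_forall fun u => ?_)
      (Filter.Eventually.of_forall fun u => ?_)
    · rw [Real.norm_eq_abs, abs_abs]
      have : (2:ℝ) = ∫ _ : J, (2:ℝ) ∂μ := by simp
      rw [this, show |∫ y, W u y * (W y (x n) - W y x₀) ∂μ| =
          ‖∫ y, W u y * (W y (x n) - W y x₀) ∂μ‖ from (Real.norm_eq_abs _).symm]
      refine norm_integral_le_of_norm_le (integrable_const 2)
        (Filter.Eventually.of_forall fun y => ?_)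
      rw [norm_mul]
      have h2 : ‖W y (x n) - W y x₀‖ ≤ 2 := by
        rw [Real.norm_eq_abs, abs_le]
        constructor <;> nlinarith [hW0 y (x n), hW1 y (x n), hW0 y x₀, hW1 y x₀]
      calc ‖W u y‖ * ‖W y (x n) - W y x₀‖ ≤ 1 * 2 :=
            mul_le_mul (hWb u y) h2 (norm_nonneg _) zero_le_one
        _ = 2 := by ring
    · simpa using (hpt u).abs
  simpa using hmain
end

section
/- Let (J,W) be a pure graphon, and let f ∈ L²(J) be an eigenfunction of the kernel operator of W with nonzero eigenvalue λ, i.e., λ f(x) = ∫_J W(x,y) f(y) dy for all x. Then f is bounded (|f(x)| ≤ ‖f‖₂/|λ|) and f is continuous with respect to the neighborhood metric r_W. -/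
/-!
Since `0 ≤ W ≤ 1`, the eigenvalue equation gives `|λ| |f x| ≤ ∫ |f| ≤ ‖f‖₂`, which is the bound.
Subtracting the equations at `x` and `x'` and using that bound,
`|λ| |f x - f x'| ≤ (‖f‖₂ / |λ|) ∫ |W x z - W x' z| dz = (‖f‖₂ / |λ|) r_W(x, x')`,
so `f` is even Lipschitz for `r_W`.
-/

open MeasureTheory

theorem MeasureTheory.MemLp.integral_abs_le_toReal_eLpNorm {α : Type*} [MeasurableSpace α]
    {μ : Measure α} [IsProbabilityMeasure μ] {f : α → ℝ} {p : ENNReal} (hp : 1 ≤ p)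
    (hf : MemLp f p μ) : ∫ y, |f y| ∂μ ≤ (eLpNorm f p μ).toReal := by
  have h_one : ∫ y, |f y| ∂μ = (eLpNorm f 1 μ).toReal := by
    simp_rw [eLpNorm_one_eq_lintegral_enorm, ← Real.norm_eq_abs]
    exact integral_norm_eq_lintegral_enorm hf.1
  rw [h_one]
  exact ENNReal.toReal_mono hf.eLpNorm_lt_top.ne (eLpNorm_le_eLpNorm_of_exponent_le hp hf.1)

section KernelEigenfunction

variable {α : Type*} [MeasurableSpace α] {μ : Measure α} {W : α → α → ℝ} {f : α → ℝ} {lam : ℝ}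

theorem abs_integral_mul_le_mul_integral_abs {g : α → ℝ} {C : ℝ} (hf : Integrable f μ)
    (hg : ∀ y, |g y| ≤ C) : |∫ y, g y * f y ∂μ| ≤ C * ∫ y, |f y| ∂μ := by
  rw [← integral_const_mul, ← Real.norm_eq_abs]
  refine norm_integral_le_of_norm_le (hf.abs.const_mul C) (Filter.Eventually.of_forall fun y => ?_)
  rw [Real.norm_eq_abs, abs_mul]
  exact mul_le_mul_of_nonneg_right (hg y) (abs_nonneg _)

theorem abs_le_integral_abs_div_of_eigen (hW : ∀ x y, |W x y| ≤ 1) (hf : Integrable f μ)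
    (hlam : lam ≠ 0) (heig : ∀ x, lam * f x = ∫ y, W x y * f y ∂μ) (x : α) :
    |f x| ≤ (∫ y, |f y| ∂μ) / |lam| := by
  rw [le_div_iff₀ (abs_pos.mpr hlam), mul_comm, ← abs_mul, heig x]
  simpa using abs_integral_mul_le_mul_integral_abs hf (hW x)

theorem lipschitzWith_of_eigen [PseudoMetricSpace α] [IsFiniteMeasure μ]
    (hWmeas : ∀ x, AEStronglyMeasurable (W x) μ) (hW : ∀ x y, |W x y| ≤ 1)
    (hdist : ∀ x y, dist x y = ∫ z, |W x z - W y z| ∂μ) (hf : Integrable f μ) {B : ℝ}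
    (hB : ∀ x, |f x| ≤ B) (hlam : lam ≠ 0) (heig : ∀ x, lam * f x = ∫ y, W x y * f y ∂μ) :
    LipschitzWith (B / |lam|).toNNReal f := by
  have hWf : ∀ x, Integrable (fun y => W x y * f y) μ := fun x =>
    hf.bdd_mul (hWmeas x) (Filter.Eventually.of_forall (hW x))
  refine LipschitzWith.of_dist_le' fun x x' => ?_
  have h_sub : lam * (f x - f x') = ∫ y, f y * (W x y - W x' y) ∂μ := by
    rw [mul_sub, heig x, heig x', ← integral_sub (hWf x) (hWf x')]
    simp only [mul_comm (f _), sub_mul]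
  have h_diff : Integrable (fun y => W x y - W x' y) μ :=
    (integrable_const 2).mono' ((hWmeas x).sub (hWmeas x')) (Filter.Eventually.of_forall
      fun y => (abs_sub _ _).trans (by linarith [hW x y, hW x' y]))
  rw [Real.dist_eq, hdist, div_mul_eq_mul_div, le_div_iff₀ (abs_pos.mpr hlam), mul_comm,
    ← abs_mul, h_sub]
  exact abs_integral_mul_le_mul_integral_abs h_diff hB

end KernelEigenfunction

theorem eigenfunction_bounded_continuous_general
    {J : Type*} [MetricSpace J]
    [MeasurableSpace J]
    (μ : Measure J) [IsProbabilityMeasure μ]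
    (W : J → J → ℝ)
    (hWmeas : Measurable (fun p : J × J => W p.1 p.2))
    (hW0 : ∀ x y, 0 ≤ W x y) (hW1 : ∀ x y, W x y ≤ 1)
    (hdist : ∀ x y : J, dist x y = ∫ z, |W x z - W y z| ∂μ)
    (f : J → ℝ) (hf : MemLp f 2 μ)
    (lam : ℝ) (hlam : lam ≠ 0)
    (heig : ∀ x, lam * f x = ∫ y, W x y * f y ∂μ) :
    (∀ x, |f x| ≤ (eLpNorm f 2 μ).toReal / |lam|) ∧ Continuous f := by
  have hW : ∀ x y, |W x y| ≤ 1 := fun x y => abs_le.mpr ⟨by linarith [hW0 x y], hW1 x y⟩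
  have hWx : ∀ x, AEStronglyMeasurable (W x) μ := fun x =>
    (hWmeas.comp measurable_prodMk_left).aestronglyMeasurable
  have hfi : Integrable f μ := hf.integrable (by norm_num)
  have hbound : ∀ x, |f x| ≤ (eLpNorm f 2 μ).toReal / |lam| := fun x =>
    (abs_le_integral_abs_div_of_eigen hW hfi hlam heig x).trans <|
      div_le_div_of_nonneg_right (hf.integral_abs_le_toReal_eLpNorm (by norm_num)) (abs_nonneg _)
  exact ⟨hbound, (lipschitzWith_of_eigen hWx hW hdist hfi hbound hlam heig).continuous⟩

/-- For a pure graphon `(J,W)`, every `L²` eigenfunction `f` of the kernel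
operator of `W` with nonzero eigenvalue `λ` is bounded, `|f(x)| ≤ ‖f‖₂/|λ|`,
and continuous with respect to the neighborhood metric `r_W`. -/
theorem eigenfunction_bounded_continuous
    {J : Type*} [MetricSpace J] [CompleteSpace J] [TopologicalSpace.SeparableSpace J]
    [MeasurableSpace J] [BorelSpace J]
    (μ : Measure J) [IsProbabilityMeasure μ] [μ.IsOpenPosMeasure]
    (W : J → J → ℝ)
    (hWmeas : Measurable (fun p : J × J => W p.1 p.2))
    (hWsymm : ∀ x y, W x y = W y x)
    (hW0 : ∀ x y, 0 ≤ W x y) (hW1 : ∀ x y, W x y ≤ 1)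
    (hdist : ∀ x y : J, dist x y = ∫ z, |W x z - W y z| ∂μ)
    (f : J → ℝ) (hf : MemLp f 2 μ)
    (lam : ℝ) (hlam : lam ≠ 0)
    (heig : ∀ x, lam * f x = ∫ y, W x y * f y ∂μ) :
    (∀ x, |f x| ≤ (eLpNorm f 2 μ).toReal / |lam|) ∧ Continuous f :=
  eigenfunction_bounded_continuous_general μ W hWmeas hW0 hW1 hdist f hf lam hlam heig
end

section
/- Let H be a family of subsets of a set V with Vapnik–Červonenkis dimension at most k, and let H(△)H = {A △ B : A, B ∈ H} be the family of pairwise symmetric differences. Then the VC-dimension of H(△)H is at most 10k. -/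
open Finset

/-- A finite set `S` is shattered by a family `H` of subsets of `V` if every
subset of `S` is the trace of a member of `H` on `S`. -/
def SetShatters {V : Type*} (H : Set (Set V)) (S : Finset V) : Prop :=
  ∀ X : Set V, X ⊆ ↑S → ∃ Y ∈ H, X = Y ∩ ↑S

private lemma fact_add_10 (n : ℕ) : (n+10).factorial =
    ((n+1)*(n+2)*(n+3)*(n+4)*(n+5)*(n+6)*(n+7)*(n+8)*(n+9)*(n+10)) * n.factorial := by
  rw [show n+10 = n+9+1 from rfl, Nat.factorial_succ,
      show n+9 = n+8+1 from rfl, Nat.factorial_succ,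
      show n+8 = n+7+1 from rfl, Nat.factorial_succ,
      show n+7 = n+6+1 from rfl, Nat.factorial_succ,
      show n+6 = n+5+1 from rfl, Nat.factorial_succ,
      show n+5 = n+4+1 from rfl, Nat.factorial_succ,
      show n+4 = n+3+1 from rfl, Nat.factorial_succ,
      show n+3 = n+2+1 from rfl, Nat.factorial_succ,
      show n+2 = n+1+1 from rfl, Nat.factorial_succ,
      Nat.factorial_succ]
  ring

private lemma fact_add_9 (n : ℕ) : (n+9).factorial =
    ((n+1)*(n+2)*(n+3)*(n+4)*(n+5)*(n+6)*(n+7)*(n+8)*(n+9)) * n.factorial := by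
  rw [show n+9 = n+8+1 from rfl, Nat.factorial_succ,
      show n+8 = n+7+1 from rfl, Nat.factorial_succ,
      show n+7 = n+6+1 from rfl, Nat.factorial_succ,
      show n+6 = n+5+1 from rfl, Nat.factorial_succ,
      show n+5 = n+4+1 from rfl, Nat.factorial_succ,
      show n+4 = n+3+1 from rfl, Nat.factorial_succ,
      show n+3 = n+2+1 from rfl, Nat.factorial_succ,
      show n+2 = n+1+1 from rfl, Nat.factorial_succ,
      Nat.factorial_succ]
  ring

/-- The key ratio bound: `C(10k+11, k+1) ≤ 32 · C(10k+1, k)`. -/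
private lemma key_step (k : ℕ) : (10*k+11).choose (k+1) ≤ 32 * (10*k+1).choose k := by
  have h1 := Nat.choose_mul_factorial_mul_factorial (show k+1 ≤ 10*k+11 by omega)
  have h2 := Nat.choose_mul_factorial_mul_factorial (show k ≤ 10*k+1 by omega)
  rw [show 10*k+11-(k+1) = 9*k+10 by omega] at h1
  rw [show 10*k+1-k = 9*k+1 by omega] at h2
  have e10 : (10*k+11).factorial =
      ((10*k+2)*(10*k+3)*(10*k+4)*(10*k+5)*(10*k+6)*(10*k+7)*(10*k+8)*(10*k+9)*(10*k+10)*(10*k+11))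
        * (10*k+1).factorial := by
    rw [show (10*k+11) = (10*k+1)+10 by ring, fact_add_10]
  have e9 : (9*k+10).factorial =
      ((9*k+2)*(9*k+3)*(9*k+4)*(9*k+5)*(9*k+6)*(9*k+7)*(9*k+8)*(9*k+9)*(9*k+10))
        * (9*k+1).factorial := by
    rw [show (9*k+10) = (9*k+1)+9 by ring, fact_add_9]
  have hfp : 0 < (k+1).factorial * (9*k+10).factorial := by positivity
  refine Nat.le_of_mul_le_mul_right ?_ hfp
  have prodineq :
      (10*k+2)*(10*k+3)*(10*k+4)*(10*k+5)*(10*k+6)*(10*k+7)*(10*k+8)*(10*k+9)*(10*k+10)*(10*k+11)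
      ≤ 32 * (k+1) *
        ((9*k+2)*(9*k+3)*(9*k+4)*(9*k+5)*(9*k+6)*(9*k+7)*(9*k+8)*(9*k+9)*(9*k+10)) := by
    calc (10*k+2)*(10*k+3)*(10*k+4)*(10*k+5)*(10*k+6)*(10*k+7)*(10*k+8)*(10*k+9)*(10*k+10)*(10*k+11)
        ≤ (10*k+2)*(10*k+3)*(10*k+4)*(10*k+5)*(10*k+6)*(10*k+7)*(10*k+8)*(10*k+9)*(10*k+10)*(10*k+11)
          + (76204800 + 1325805120*k^1 + 9900544032*k^2 + 41900206304*k^3 + 111476086624*k^4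
             + 194933169984*k^5 + 226737540960*k^6 + 172798835136*k^7 + 82152374016*k^8
             + 21782189536*k^9 + 2397455648*k^10) := Nat.le_add_right _ _
      _ = 32 * (k+1) *
          ((9*k+2)*(9*k+3)*(9*k+4)*(9*k+5)*(9*k+6)*(9*k+7)*(9*k+8)*(9*k+9)*(9*k+10)) := by ring
  calc (10*k+11).choose (k+1) * ((k+1).factorial * (9*k+10).factorial)
      = (10*k+11).choose (k+1) * (k+1).factorial * (9*k+10).factorial := by ring
    _ = (10*k+11).factorial := h1
    _ = ((10*k+2)*(10*k+3)*(10*k+4)*(10*k+5)*(10*k+6)*(10*k+7)*(10*k+8)*(10*k+9)*(10*k+10)*(10*k+11))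
          * (10*k+1).factorial := e10
    _ ≤ (32 * (k+1) *
          ((9*k+2)*(9*k+3)*(9*k+4)*(9*k+5)*(9*k+6)*(9*k+7)*(9*k+8)*(9*k+9)*(9*k+10)))
          * (10*k+1).factorial := Nat.mul_le_mul_right _ prodineq
    _ = 32 * (10*k+1).choose k * ((k+1).factorial * (9*k+10).factorial) := by
        rw [e9, ← h2, show (k+1).factorial = (k+1) * k.factorial from Nat.factorial_succ k]
        ring

private lemma sq_choose (k : ℕ) (hk : 1 ≤ k) :
    2 * ((10*k+1).choose k)^2 ≤ 2^(10*k) := by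
  induction k with
  | zero => omega
  | succ n ih =>
    rcases Nat.eq_or_lt_of_le hk with h | h
    · have : n = 0 := by omega
      subst this
      norm_num
    · have hn : 1 ≤ n := by omega
      have ihn := ih hn
      have hks := key_step n
      have e : 10*(n+1)+1 = 10*n+11 := by ring
      rw [e]
      calc 2 * ((10*n+11).choose (n+1))^2
          ≤ 2 * (32 * (10*n+1).choose n)^2 := by
            have := Nat.pow_le_pow_left hks 2
            omega
        _ = 1024 * (2 * ((10*n+1).choose n)^2) := by ring
        _ ≤ 1024 * 2^(10*n) := Nat.mul_le_mul_left _ ihn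
        _ = 2^(10*(n+1)) := by rw [show 10*(n+1) = 10*n+10 by ring, pow_add]; ring_nf

private lemma geom_two (n : ℕ) : (∑ i ∈ range n, 2^i) + 1 = 2^n := by
  induction n with
  | zero => simp
  | succ m ih => rw [Finset.sum_range_succ, pow_succ]; omega

private lemma term_bound (k : ℕ) : ∀ d i : ℕ, i + d = k →
    2^d * (10*k+1).choose i ≤ (10*k+1).choose k := by
  intro d
  induction d with
  | zero => intro i h; simp [show i = k by omega]
  | succ d ih =>
    intro i h
    have hik : i + 1 ≤ k := by omega
    have hstep : 2 * (10*k+1).choose i ≤ (10*k+1).choose (i+1) := by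
      have hc := Nat.choose_succ_right_eq (10*k+1) i
      have hcp : 0 < (10*k+1).choose i := Nat.choose_pos (by omega)
      have hsub : 2*(i+1) ≤ 10*k+1-i := by omega
      refine Nat.le_of_mul_le_mul_right ?_ (Nat.succ_pos i)
      calc 2 * (10*k+1).choose i * (i+1) = (10*k+1).choose i * (2*(i+1)) := by ring
        _ ≤ (10*k+1).choose i * (10*k+1-i) := Nat.mul_le_mul_left _ hsub
        _ = (10*k+1).choose (i+1) * (i+1) := hc.symm
    calc 2^(d+1) * (10*k+1).choose i = 2^d * (2 * (10*k+1).choose i) := by ring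
      _ ≤ 2^d * (10*k+1).choose (i+1) := Nat.mul_le_mul_left _ hstep
      _ ≤ (10*k+1).choose k := ih (i+1) (by omega)

private lemma sum_lt_two_choose (k : ℕ) :
    ∑ i ∈ range (k+1), (10*k+1).choose i < 2 * (10*k+1).choose k := by
  have hcp : 0 < (10*k+1).choose k := Nat.choose_pos (by omega)
  have hmul : (∑ i ∈ range (k+1), (10*k+1).choose i) * 2^k
      < (2 * (10*k+1).choose k) * 2^k := by
    calc (∑ i ∈ range (k+1), (10*k+1).choose i) * 2^k
        = ∑ i ∈ range (k+1), 2^i * (2^(k-i) * (10*k+1).choose i) := by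
          rw [Finset.sum_mul]
          refine Finset.sum_congr rfl fun i hi => ?_
          have hik : i ≤ k := by simpa [Nat.lt_succ_iff] using hi
          rw [← mul_assoc, ← pow_add, show i + (k-i) = k by omega, mul_comm]
      _ ≤ ∑ i ∈ range (k+1), 2^i * (10*k+1).choose k := by
          refine Finset.sum_le_sum fun i hi => ?_
          have hik : i ≤ k := by simpa [Nat.lt_succ_iff] using hi
          exact Nat.mul_le_mul_left _ (term_bound k (k-i) i (by omega))
      _ = (∑ i ∈ range (k+1), 2^i) * (10*k+1).choose k := by rw [Finset.sum_mul]
      _ < 2^(k+1) * (10*k+1).choose k := by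
          have := geom_two (k+1)
          have hlt : (∑ i ∈ range (k+1), 2^i) < 2^(k+1) := by omega
          exact Nat.mul_lt_mul_of_lt_of_le hlt le_rfl hcp
      _ = (2 * (10*k+1).choose k) * 2^k := by rw [pow_succ]; ring
  exact Nat.lt_of_mul_lt_mul_right hmul

private lemma numeric (k : ℕ) :
    (∑ i ∈ range (k+1), (10*k+1).choose i)^2 < 2^(10*k+1) := by
  rcases Nat.eq_zero_or_pos k with rfl | hk
  · norm_num
  · have h1 := sum_lt_two_choose k
    have h2 := sq_choose k hk
    calc (∑ i ∈ range (k+1), (10*k+1).choose i)^2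
        < (2 * (10*k+1).choose k)^2 := Nat.pow_lt_pow_left h1 (by norm_num)
      _ = 2 * (2 * ((10*k+1).choose k)^2) := by ring
      _ ≤ 2 * 2^(10*k) := Nat.mul_le_mul_left _ h2
      _ = 2^(10*k+1) := by rw [pow_succ]; ring

private lemma trace_bound {V : Type*} [DecidableEq V] (H : Set (Set V)) (k : ℕ)
    (hH : ∀ S : Finset V, SetShatters H S → S.card ≤ k) (S : Finset V)
    (hS : SetShatters {C | ∃ A ∈ H, ∃ B ∈ H, C = symmDiff A B} S) :
    2^S.card ≤ (∑ i ∈ range (k+1), S.card.choose i)^2 := by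
  classical
  set 𝒯 : Finset (Finset V) :=
    S.powerset.filter (fun t => ∃ Y ∈ H, (t : Set V) = Y ∩ ↑S) with h𝒯
  have h𝒯S : ∀ t ∈ 𝒯, t ⊆ S := fun t ht => Finset.mem_powerset.1 (Finset.mem_filter.1 ht).1
  have hshat : ∀ s : Finset V, 𝒯.Shatters s → s.card ≤ k := by
    intro s hs
    apply hH
    have hsS : s ⊆ S := by
      obtain ⟨t, ht, hst⟩ := hs.exists_superset
      exact hst.trans (h𝒯S t ht)
    intro X hX
    set t : Finset V := s.filter (· ∈ X) with ht
    have hts : t ⊆ s := Finset.filter_subset _ _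
    have hct : (t : Set V) = X := by
      ext x
      simp only [ht, Finset.coe_filter, Set.mem_setOf_eq]
      exact ⟨fun h => h.2, fun h => ⟨hX h, h⟩⟩
    obtain ⟨u, hu𝒯, hsu⟩ := hs hts
    obtain ⟨Y, hY, hu⟩ := (Finset.mem_filter.1 hu𝒯).2
    refine ⟨Y, hY, ?_⟩
    have hco : (↑(s ∩ u) : Set V) = Y ∩ ↑s := by
      rw [Finset.coe_inter, hu]
      ext x
      simp only [Set.mem_inter_iff, Finset.mem_coe]
      exact ⟨fun ⟨a, b, _⟩ => ⟨b, a⟩, fun ⟨b, a⟩ => ⟨a, b, hsS a⟩⟩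
    rw [← hco, hsu, hct]
  have hvc : 𝒯.shatterer ⊆ (range (k+1)).biUnion (fun i => S.powersetCard i) := by
    intro t ht
    rw [Finset.mem_shatterer] at ht
    have h1 : t.card ≤ k := hshat t ht
    have h2 : t ⊆ S := by
      obtain ⟨u, hu, htu⟩ := ht.exists_superset
      exact htu.trans (h𝒯S u hu)
    exact Finset.mem_biUnion.2 ⟨t.card, Finset.mem_range.2 (by omega),
      Finset.mem_powersetCard.2 ⟨h2, rfl⟩⟩
  have hTcard : 𝒯.card ≤ ∑ i ∈ range (k+1), S.card.choose i := by
    calc 𝒯.card ≤ 𝒯.shatterer.card := Finset.card_le_card_shatterer _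
      _ ≤ ((range (k+1)).biUnion (fun i => S.powersetCard i)).card := Finset.card_le_card hvc
      _ ≤ ∑ i ∈ range (k+1), (S.powersetCard i).card := Finset.card_biUnion_le
      _ = ∑ i ∈ range (k+1), S.card.choose i := by
          simp [Finset.card_powersetCard]
  have himg : S.powerset ⊆ (𝒯 ×ˢ 𝒯).image (fun p => symmDiff p.1 p.2) := by
    intro t ht
    have htS : (↑t : Set V) ⊆ ↑S := Finset.coe_subset.2 (Finset.mem_powerset.1 ht)
    obtain ⟨C, hC, htC⟩ := hS ↑t htS
    obtain ⟨A, hA, B, hB, rfl⟩ := hC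
    set a : Finset V := S.filter (· ∈ A) with ha
    set b : Finset V := S.filter (· ∈ B) with hb
    have hca : (↑a : Set V) = A ∩ ↑S := by
      ext x
      simp only [ha, Finset.coe_filter, Set.mem_setOf_eq, Set.mem_inter_iff, Finset.mem_coe]
      exact ⟨fun h => ⟨h.2, h.1⟩, fun h => ⟨h.2, h.1⟩⟩
    have hcb : (↑b : Set V) = B ∩ ↑S := by
      ext x
      simp only [hb, Finset.coe_filter, Set.mem_setOf_eq, Set.mem_inter_iff, Finset.mem_coe]
      exact ⟨fun h => ⟨h.2, h.1⟩, fun h => ⟨h.2, h.1⟩⟩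
    have ha𝒯 : a ∈ 𝒯 :=
      Finset.mem_filter.2 ⟨Finset.mem_powerset.2 (Finset.filter_subset _ _), ⟨A, hA, hca⟩⟩
    have hb𝒯 : b ∈ 𝒯 :=
      Finset.mem_filter.2 ⟨Finset.mem_powerset.2 (Finset.filter_subset _ _), ⟨B, hB, hcb⟩⟩
    refine Finset.mem_image.2 ⟨(a, b), Finset.mem_product.2 ⟨ha𝒯, hb𝒯⟩, ?_⟩
    apply Finset.coe_injective
    rw [Finset.coe_symmDiff, hca, hcb, htC]
    exact (inf_symmDiff_distrib_right A B (↑S : Set V)).symm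
  have hpow : 2^S.card ≤ (𝒯.card)^2 := by
    calc 2^S.card = S.powerset.card := (Finset.card_powerset S).symm
      _ ≤ ((𝒯 ×ˢ 𝒯).image (fun p => symmDiff p.1 p.2)).card := Finset.card_le_card himg
      _ ≤ (𝒯 ×ˢ 𝒯).card := Finset.card_image_le
      _ = 𝒯.card * 𝒯.card := Finset.card_product _ _
      _ = (𝒯.card)^2 := (sq _).symm
  exact hpow.trans (Nat.pow_le_pow_left hTcard 2)

/-- If a family `H` has VC-dimension at most `k` (every shattered finite set
has at most `k` elements), then the family `{A △ B : A, B ∈ H}` of symmetric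
differences has VC-dimension at most `10k`. -/
theorem vc_dim_symmDiff_le
    {V : Type*} (H : Set (Set V)) (k : ℕ)
    (hH : ∀ S : Finset V, SetShatters H S → S.card ≤ k) :
    ∀ S : Finset V, SetShatters {C | ∃ A ∈ H, ∃ B ∈ H, C = symmDiff A B} S →
      S.card ≤ 10 * k := by
  classical
  intro S hS
  by_contra hcon
  push_neg at hcon
  obtain ⟨S', hsub, hcard⟩ := Finset.exists_subset_card_eq (show 10*k+1 ≤ S.card by omega)
  have hS' : SetShatters {C | ∃ A ∈ H, ∃ B ∈ H, C = symmDiff A B} S' := by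
    intro X hX
    have hXS : X ⊆ ↑S := hX.trans (Finset.coe_subset.2 hsub)
    obtain ⟨Y, hY, hXY⟩ := hS X hXS
    refine ⟨Y, hY, ?_⟩
    calc X = X ∩ ↑S' := (Set.inter_eq_left.mpr hX).symm
      _ = (Y ∩ ↑S) ∩ ↑S' := by rw [← hXY]
      _ = Y ∩ ↑S' := by
          rw [Set.inter_assoc, Set.inter_eq_right.mpr (Finset.coe_subset.2 hsub)]
  have hb := trace_bound H k hH S' hS'
  rw [hcard] at hb
  exact absurd hb (not_le.2 (numeric k))
end

section
/- Let H be a family of measurable sets in a probability space (Ω,π) with VC-dimension at most k, such that π(A △ B) ≥ ε for all distinct A, B ∈ H, where 0 < ε < 1. Then |H| ≤ (80k)^{10k} · ε^{−20k}. -/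
/-! Any two distinct members of `H` differ on a set of measure at least `ε`, so by averaging some
point lies in an `ε`-fraction of these symmetric differences; picking such points greedily yields a
set `T` of `O(log |H| / ε)` points meeting all of them. The members of `H` then have distinct traces
on `T`, and the trace family has VC-dimension at most `k`, so Sauer–Shelah gives
`|H| ≤ (k + 1) (|T| + 1) ^ k`. Since `log |H| ≤ 2k |H| ^ (1 / 2k)`, this self-referential bound
forces `|H| ≤ (12k / ε) ^ (2k)`. -/

open MeasureTheory

open Finset

section Transversal

-- Opened only locally: `Real`'s notation `π` would capture the measure `π` of the main theorem.
open Real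

variable {Ω : Type*} [MeasurableSpace Ω] {μ : Measure Ω} [IsProbabilityMeasure μ] {ε : ℝ}

open scoped Classical in
lemma exists_sum_measureReal_le_card_filter_mem (𝒮 : Finset (Set Ω))
    (h𝒮 : ∀ s ∈ 𝒮, MeasurableSet s) :
    ∃ x, ∑ s ∈ 𝒮, μ.real s ≤ #{s ∈ 𝒮 | x ∈ s} := by
  have hint : ∀ s ∈ 𝒮, Integrable (s.indicator (1 : Ω → ℝ)) μ :=
    fun s hs ↦ (integrable_const 1).indicator (h𝒮 s hs)
  obtain ⟨x, hx⟩ := exists_integral_le (integrable_finsetSum 𝒮 hint)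
  rw [integral_finsetSum 𝒮 hint,
    sum_congr rfl fun s hs ↦ integral_indicator_one (h𝒮 s hs)] at hx
  refine ⟨x, hx.trans_eq ?_⟩
  simp [Set.indicator_apply]

lemma exists_transversal_card_le_of_card_lt_exp (m : ℕ) (𝒮 : Finset (Set Ω))
    (h𝒮 : ∀ s ∈ 𝒮, MeasurableSet s) (hε : ∀ s ∈ 𝒮, ε ≤ μ.real s)
    (hcard : #𝒮 < exp (ε * m)) :
    ∃ T : Finset Ω, #T ≤ m ∧ ∀ s ∈ 𝒮, ∃ x ∈ T, x ∈ s := by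
  classical
  induction m generalizing 𝒮 with
  | zero =>
    have : 𝒮 = ∅ := by simpa using hcard
    exact ⟨∅, by simp, by simp [this]⟩
  | succ m ih =>
    obtain ⟨x, hx⟩ := exists_sum_measureReal_le_card_filter_mem (μ := μ) 𝒮 h𝒮
    have hmiss : (#{s ∈ 𝒮 | x ∉ s} : ℝ) < exp (ε * m) := by
      have hsplit := card_filter_add_card_filter_not (s := 𝒮) (x ∈ ·)
      have hsum : #𝒮 * ε ≤ ∑ s ∈ 𝒮, μ.real s := by
        simpa [mul_comm] using card_nsmul_le_sum 𝒮 _ ε hε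
      calc (#{s ∈ 𝒮 | x ∉ s} : ℝ) ≤ #𝒮 * (1 - ε) := by
            rw [← hsplit] at hsum ⊢; push_cast at hsum ⊢; linarith
        _ ≤ #𝒮 * exp (-ε) := by gcongr; exact one_sub_le_exp_neg ε
        _ < exp (ε * (m + 1)) * exp (-ε) := by gcongr; exact_mod_cast hcard
        _ = exp (ε * m) := by rw [← exp_add]; ring_nf
    obtain ⟨T, hTm, hT⟩ := ih _ (fun s hs ↦ h𝒮 s (mem_filter.1 hs).1)
      (fun s hs ↦ hε s (mem_filter.1 hs).1) hmiss
    refine ⟨insert x T, (card_insert_le _ _).trans (by omega), fun s hs ↦ ?_⟩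
    by_cases hxs : x ∈ s
    · exact ⟨x, mem_insert_self _ _, hxs⟩
    · obtain ⟨y, hy, hys⟩ := hT s (mem_filter.2 ⟨hs, hxs⟩)
      exact ⟨y, mem_insert_of_mem hy, hys⟩

lemma exists_transversal_card_le_log_div (hε0 : 0 < ε) (𝒮 : Finset (Set Ω))
    (h𝒮 : ∀ s ∈ 𝒮, MeasurableSet s) (hε : ∀ s ∈ 𝒮, ε ≤ μ.real s) :
    ∃ T : Finset Ω, (#T : ℝ) ≤ log #𝒮 / ε + 1 ∧ ∀ s ∈ 𝒮, ∃ x ∈ T, x ∈ s := by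
  set m := ⌊log #𝒮 / ε⌋₊ + 1
  have hcard : (#𝒮 : ℝ) < exp (ε * m) := by
    rcases (#𝒮).eq_zero_or_pos with h0 | hpos
    · simp [h0, exp_pos]
    calc (#𝒮 : ℝ) = exp (log #𝒮) := (exp_log (by exact_mod_cast hpos)).symm
      _ < exp (ε * m) := by
        rw [exp_lt_exp, ← div_lt_iff₀' hε0]
        exact_mod_cast Nat.lt_floor_add_one _
  obtain ⟨T, hTm, hT⟩ := exists_transversal_card_le_of_card_lt_exp m 𝒮 h𝒮 hε hcard
  refine ⟨T, ?_, hT⟩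
  calc (#T : ℝ) ≤ m := by exact_mod_cast hTm
    _ ≤ log #𝒮 / ε + 1 := by
      push_cast [m]; gcongr; exact Nat.floor_le (div_nonneg (log_natCast_nonneg _) hε0.le)

lemma exists_transversal_symmDiff_card_le (hε0 : 0 < ε) {H : Finset (Set Ω)}
    (hH : ∀ A ∈ H, MeasurableSet A)
    (hsep : ∀ A ∈ H, ∀ B ∈ H, A ≠ B → ε ≤ μ.real (symmDiff A B)) :
    ∃ T : Finset Ω, (#T : ℝ) ≤ 2 * log #H / ε + 1 ∧
      ∀ A ∈ H, ∀ B ∈ H, A ≠ B → ∃ x ∈ T, x ∈ symmDiff A B := by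
  classical
  set 𝒮 := H.offDiag.image fun p ↦ symmDiff p.1 p.2
  have h𝒮 : ∀ s ∈ 𝒮, MeasurableSet s ∧ ε ≤ μ.real s := by
    simp only [𝒮, mem_image, mem_offDiag]
    rintro _ ⟨⟨A, B⟩, ⟨hA, hB, hAB⟩, rfl⟩
    exact ⟨(hH A hA).symmDiff (hH B hB), hsep A hA B hB hAB⟩
  obtain ⟨T, hT_card, hT⟩ := exists_transversal_card_le_log_div hε0 𝒮
    (fun s hs ↦ (h𝒮 s hs).1) fun s hs ↦ (h𝒮 s hs).2
  have hlog : log #𝒮 ≤ 2 * log #H := by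
    rcases (#𝒮).eq_zero_or_pos with h0 | hpos
    · simpa [h0] using log_natCast_nonneg _
    have hcard : #𝒮 ≤ #H ^ 2 := card_image_le.trans (by simp [offDiag_card, sq])
    calc log #𝒮 ≤ log ((#H : ℝ) ^ 2) :=
          log_le_log (by exact_mod_cast hpos) (by exact_mod_cast hcard)
      _ = 2 * log #H := by rw [log_pow, Nat.cast_ofNat]
  refine ⟨T, hT_card.trans (by gcongr), fun A hA B hB hAB ↦ hT _ ?_⟩
  exact mem_image.2 ⟨(A, B), mem_offDiag.2 ⟨hA, hB, hAB⟩, rfl⟩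

end Transversal

section Trace

variable {α : Type*} {k : ℕ}

lemma card_le_of_forall_shatters_card_le [DecidableEq α] {𝒜 : Finset (Finset α)} {T : Finset α}
    (h𝒜 : ∀ s ∈ 𝒜, s ⊆ T) (hk : ∀ s, 𝒜.Shatters s → #s ≤ k) :
    #𝒜 ≤ (k + 1) * (#T + 1) ^ k := by
  have hsub : 𝒜.shatterer ⊆ (range (k + 1)).biUnion T.powersetCard := by
    intro s hs
    obtain ⟨t, ht, hst⟩ := (mem_shatterer.1 hs).exists_superset
    exact mem_biUnion.2 ⟨#s, mem_range.2 (Nat.lt_succ_of_le (hk s (mem_shatterer.1 hs))),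
      mem_powersetCard.2 ⟨hst.trans (h𝒜 t ht), rfl⟩⟩
  calc #𝒜 ≤ #𝒜.shatterer := card_le_card_shatterer 𝒜
    _ ≤ ∑ i ∈ range (k + 1), #(T.powersetCard i) := (card_le_card hsub).trans card_biUnion_le
    _ ≤ ∑ _i ∈ range (k + 1), (#T + 1) ^ k := by
      gcongr with i hi
      rw [card_powersetCard]
      calc (#T).choose i ≤ #T ^ i := Nat.choose_le_pow _ _
        _ ≤ (#T + 1) ^ i := Nat.pow_le_pow_left (Nat.le_succ _) i
        _ ≤ (#T + 1) ^ k :=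
          Nat.pow_le_pow_right (Nat.succ_pos _) (by simpa [Nat.lt_succ_iff] using hi)
    _ = (k + 1) * (#T + 1) ^ k := by simp

open scoped Classical in
lemma injOn_filter_mem_of_forall_exists_mem_symmDiff {H : Set (Set α)} {T : Finset α}
    (hT : ∀ A ∈ H, ∀ B ∈ H, A ≠ B → ∃ x ∈ T, x ∈ symmDiff A B) :
    Set.InjOn (fun A ↦ {x ∈ T | x ∈ A}) H := by
  intro A hA B hB hAB
  by_contra hne
  obtain ⟨x, hxT, hx⟩ := hT A hA B hB hne
  have hxAB := congrArg (x ∈ ·) hAB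
  simp only [mem_filter, hxT, true_and, eq_iff_iff] at hxAB
  rw [Set.mem_symmDiff] at hx
  tauto

open scoped Classical in
lemma setShatters_of_shatters_image_filter_mem {H : Finset (Set α)} {T S : Finset α}
    (hS : (H.image fun A ↦ {x ∈ T | x ∈ A}).Shatters S) : SetShatters ↑H S := by
  have hST : S ⊆ T := by
    obtain ⟨_, hu, hSu⟩ := hS.exists_superset
    obtain ⟨Y, -, rfl⟩ := mem_image.1 hu
    exact hSu.trans (filter_subset _ _)
  intro X hX
  obtain ⟨_, hu, hYS⟩ := hS (filter_subset (· ∈ X) S)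
  obtain ⟨Y, hY, rfl⟩ := mem_image.1 hu
  refine ⟨Y, hY, Set.ext fun x ↦ ?_⟩
  have hx := congrArg (x ∈ ·) hYS
  have hxS := @hX x
  have hxT := @hST x
  simp only [mem_inter, mem_filter, eq_iff_iff, Set.mem_inter_iff, mem_coe] at hx hxS ⊢
  tauto

lemma card_le_of_forall_exists_mem_symmDiff {H : Finset (Set α)}
    (hvc : ∀ S : Finset α, SetShatters (↑H : Set (Set α)) S → #S ≤ k) {T : Finset α}
    (hT : ∀ A ∈ H, ∀ B ∈ H, A ≠ B → ∃ x ∈ T, x ∈ symmDiff A B) :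
    #H ≤ (k + 1) * (#T + 1) ^ k := by
  classical
  rw [← card_image_of_injOn (injOn_filter_mem_of_forall_exists_mem_symmDiff hT)]
  refine card_le_of_forall_shatters_card_le (T := T) (fun s hs ↦ ?_)
    fun S hS ↦ hvc S (setShatters_of_shatters_image_filter_mem hS)
  obtain ⟨A, -, rfl⟩ := mem_image.1 hs
  exact filter_subset _ _

end Trace

open Real in
lemma le_pow_of_le_succ_mul_pow_log {N ε : ℝ} {k : ℕ} (hN : 1 ≤ N) (hk : k ≠ 0) (hε0 : 0 < ε)
    (hε1 : ε ≤ 1) (h : N ≤ (k + 1) * (2 * log N / ε + 2) ^ k) :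
    N ≤ (12 * k / ε) ^ (2 * k) := by
  have hk1 : (1 : ℝ) ≤ k := by exact_mod_cast Nat.one_le_iff_ne_zero.2 hk
  set y := N ^ (1 / (2 * k : ℝ))
  have hy1 : 1 ≤ y := one_le_rpow hN (by positivity)
  have hyk : y ^ k = √N := by
    rw [← rpow_mul_natCast (by linarith), sqrt_eq_rpow]
    field_simp
  have hlog : log N ≤ 2 * k * y := by
    have := log_le_rpow_div (x := N) (by linarith) (show (0 : ℝ) < 1 / (2 * k) by positivity)
    rwa [div_div_eq_mul_div, div_one, mul_comm] at this
  have hbase : 2 * log N / ε + 2 ≤ 6 * k * y / ε := by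
    rw [div_add' _ _ _ hε0.ne', div_le_div_iff_of_pos_right hε0]
    nlinarith
  have hsqrt : N ≤ (12 * k / ε) ^ k * √N :=
    calc N ≤ (k + 1) * (2 * log N / ε + 2) ^ k := h
      _ ≤ 2 ^ k * (6 * k * y / ε) ^ k := by
        have hlogN : 0 ≤ log N := log_nonneg hN
        gcongr
        exact_mod_cast Nat.lt_two_pow_self
      _ = (12 * k / ε) ^ k * √N := by rw [← hyk, ← mul_pow, ← mul_pow]; ring_nf
  have hsqrt_pos : 0 < √N := sqrt_pos.2 (by linarith)
  have hle : √N ≤ (12 * k / ε) ^ k :=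
    le_of_mul_le_mul_right (by rwa [mul_self_sqrt (by linarith)]) hsqrt_pos
  calc N = √N ^ 2 := (sq_sqrt (by linarith)).symm
    _ ≤ ((12 * k / ε) ^ k) ^ 2 := by gcongr
    _ = (12 * k / ε) ^ (2 * k) := by rw [← pow_mul, mul_comm k 2]

/-- A family `H` of measurable sets in a probability space with VC-dimension
at most `k` whose members are pairwise at symmetric-difference measure at
least `ε` satisfies `|H| ≤ (80k)^{10k} ε^{−20k}`. -/
theorem card_le_of_vc_dim_and_packing
    {Ω : Type*} [MeasurableSpace Ω] (π : Measure Ω) [IsProbabilityMeasure π]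
    (H : Finset (Set Ω)) (hmeas : ∀ A ∈ H, MeasurableSet A)
    (k : ℕ) (hvc : ∀ S : Finset Ω, SetShatters (↑H : Set (Set Ω)) S → S.card ≤ k)
    (ε : ℝ) (hε0 : 0 < ε) (hε1 : ε < 1)
    (hsep : ∀ A ∈ H, ∀ B ∈ H, A ≠ B → ε ≤ (π (symmDiff A B)).toReal) :
    (H.card : ℝ) ≤ (80 * k : ℝ) ^ (10 * k) / ε ^ (20 * k) := by
  obtain ⟨T, hT_card, hT⟩ := exists_transversal_symmDiff_card_le (μ := π) hε0 hmeas hsep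
  have hsauer := card_le_of_forall_exists_mem_symmDiff hvc hT
  rcases H.eq_empty_or_nonempty with rfl | hne
  · simp only [card_empty, Nat.cast_zero]; positivity
  rcases Nat.eq_zero_or_pos k with rfl | hk
  · simpa using hsauer
  have hN : (1 : ℝ) ≤ #H := by exact_mod_cast hne.card_pos
  have hlogN : 0 ≤ Real.log #H := Real.log_nonneg hN
  calc (#H : ℝ) ≤ (12 * k / ε) ^ (2 * k) := by
        refine le_pow_of_le_succ_mul_pow_log hN hk.ne' hε0 hε1.le ?_
        calc (#H : ℝ) ≤ (k + 1) * (#T + 1) ^ k := by exact_mod_cast hsauer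
          _ ≤ (k + 1) * (2 * Real.log #H / ε + 2) ^ k := by
            gcongr (k + 1) * ?_ ^ k; linarith
    _ ≤ (80 * k) ^ (10 * k) / ε ^ (20 * k) := by
        have hk1 : (1 : ℝ) ≤ k := by exact_mod_cast hk
        rw [div_pow]
        gcongr (?_ : ℝ) / ?_
        · calc (12 * k : ℝ) ^ (2 * k) ≤ (80 * k) ^ (2 * k) := by gcongr; norm_num
            _ ≤ (80 * k) ^ (10 * k) := pow_le_pow_right₀ (by linarith) (by omega)
        · exact pow_le_pow_of_le_one hε0.le hε1.le (by omega)
end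

section
/- Let (J₁,J₂,W) be a pure bigraphon that is thin, i.e., there exists a bigraph F with t^b_ind(F,W) = 0. Then W(x,y) ∈ {0,1} for almost all (x,y) ∈ J₁×J₂. -/
/-!
If `W` took values in `(0, 1)` on a set of positive measure, some row `W x₀` would lie in
`[ε, 1 - ε]` on a set `S` of positive measure. The metric on `J₁` is the `L¹` distance of rows,
so by Markov's inequality finitely many rows taken from a small ball around `x₀` all stay within
`ε` of `W x₀` on a part of `S` of positive measure; there every factor of the induced-density
integrand lies in `(0, 1)`. Balls have positive measure, so the induced density of every
bigraph is positive.
-/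

open MeasureTheory Set Function

section MeasureLemmas

variable {α : Type*} [MeasurableSpace α] {μ : Measure α}

theorem exists_measure_preimage_Icc_ne_zero {f : α → ℝ} (h : μ (f ⁻¹' Ioo 0 1) ≠ 0) :
    ∃ ε > 0, μ (f ⁻¹' Icc ε (1 - ε)) ≠ 0 := by
  by_contra! hnull
  refine h (measure_mono_null (fun a ha => ?_) (measure_iUnion_null fun n : ℕ =>
    hnull (1 / ((n : ℝ) + 1)) Nat.one_div_pos_of_nat))
  obtain ⟨n, hn⟩ := exists_nat_one_div_lt (lt_min ha.1 (sub_pos.2 ha.2))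
  exact mem_iUnion.2 ⟨n, by linarith [min_le_left (f a) (1 - f a)],
    by linarith [min_le_right (f a) (1 - f a)]⟩

theorem meas_ge_lt_ofReal_of_integral_lt [IsFiniteMeasure μ] {f : α → ℝ} (hf0 : 0 ≤ᵐ[μ] f)
    (hf : Integrable f μ) {ε η : ℝ} (hε : 0 < ε) (h : ∫ a, f a ∂μ < ε * η) :
    μ {a | ε ≤ f a} < ENNReal.ofReal η := by
  have hreal : μ.real {a | ε ≤ f a} < η :=
    lt_of_mul_lt_mul_left ((mul_meas_ge_le_integral_of_nonneg hf0 hf ε).trans_lt h) hε.le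
  rwa [← ofReal_measureReal, ENNReal.ofReal_lt_ofReal_iff (measureReal_nonneg.trans_lt hreal)]

theorem measure_diff_iUnion_ne_zero {ι : Type*} [Fintype ι] {s : Set α} {t : ι → Set α}
    (h : ∑ i, μ (t i) < μ s) : μ (s \ ⋃ i, t i) ≠ 0 :=
  ((tsub_pos_of_lt ((measure_iUnion_fintype_le μ t).trans_lt h)).trans_le
      le_measure_sdiff).ne'

theorem integral_integral_pos_of_forall_mem {β : Type*} [MeasurableSpace β] {ν : Measure β}
    [IsFiniteMeasure μ] [IsFiniteMeasure ν] {F : α → β → ℝ} (hF : Measurable (uncurry F))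
    (hF0 : ∀ a b, 0 ≤ F a b) {C : ℝ} (hFC : ∀ a b, F a b ≤ C) {A : Set α} (hA : μ A ≠ 0)
    (hpos : ∀ a ∈ A, ν (support (F a)) ≠ 0) :
    0 < ∫ a, ∫ b, F a b ∂ν ∂μ := by
  have hnorm : ∀ a b, ‖F a b‖ ≤ C := fun a b => by
    rw [Real.norm_of_nonneg (hF0 a b)]; exact hFC a b
  have hint : ∀ a, Integrable (F a) ν := fun a =>
    .of_bound (hF.comp measurable_prodMk_left).aestronglyMeasurable C (ae_of_all _ (hnorm a))
  have hinner_pos : ∀ a ∈ A, 0 < ∫ b, F a b ∂ν := fun a ha =>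
    (integral_pos_iff_support_of_nonneg (hF0 a) (hint a)).2 (pos_iff_ne_zero.2 (hpos a ha))
  have houter_int : Integrable (fun a => ∫ b, F a b ∂ν) μ :=
    .of_bound hF.stronglyMeasurable.integral_prod_right'.aestronglyMeasurable (C * ν.real univ)
      (ae_of_all _ fun a => norm_integral_le_of_norm_le_const (ae_of_all _ (hnorm a)))
  refine (integral_pos_iff_support_of_nonneg (fun a => integral_nonneg (hF0 a)) houter_int).2 ?_
  exact pos_iff_ne_zero.2 fun h => hA (measure_mono_null (fun a ha => (hinner_pos a ha).ne') h)

theorem measure_pi_univ_pi_ne_zero {ι : Type*} [Fintype ι] [SigmaFinite μ] {s : Set α}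
    (hs : μ s ≠ 0) : Measure.pi (fun _ : ι => μ) (univ.pi fun _ => s) ≠ 0 := by
  rw [Measure.pi_pi]
  exact Finset.prod_ne_zero_iff.2 fun _ _ => hs

end MeasureLemmas

theorem ite_mem_unitInterval {p : Prop} [Decidable p] {w : ℝ} (hw : w ∈ unitInterval) :
    (if p then w else 1 - w) ∈ unitInterval := by
  split_ifs
  exacts [hw, Icc.mem_iff_one_sub_mem.1 hw]

theorem ite_mem_Ioo {p : Prop} [Decidable p] {w : ℝ} (hw : w ∈ Ioo (0 : ℝ) 1) :
    (if p then w else 1 - w) ∈ Ioo (0 : ℝ) 1 := by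
  split_ifs
  exacts [hw, ⟨sub_pos.2 hw.2, sub_lt_self _ hw.1⟩]

section Bigraphon

variable {J₁ J₂ ι κ : Type*} [Fintype ι] [Fintype κ] [DecidableEq ι] [DecidableEq κ]

def inducedDensityIntegrand (W : J₁ → J₂ → ℝ) (E : Finset (ι × κ)) (x : ι → J₁) (y : κ → J₂) :
    ℝ :=
  ∏ i, ∏ j, if (i, j) ∈ E then W (x i) (y j) else 1 - W (x i) (y j)

variable {W : J₁ → J₂ → ℝ} (E : Finset (ι × κ))

theorem measurable_inducedDensityIntegrand [MeasurableSpace J₁] [MeasurableSpace J₂]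
    (hW : Measurable (uncurry W)) : Measurable (uncurry (inducedDensityIntegrand W E)) := by
  refine Finset.measurable_prod _ fun i _ => Finset.measurable_prod _ fun j _ => ?_
  have hij : Measurable fun p : (ι → J₁) × (κ → J₂) => W (p.1 i) (p.2 j) :=
    hW.comp (f := fun p : (ι → J₁) × (κ → J₂) => (p.1 i, p.2 j)) (by fun_prop)
  exact Measurable.ite (.const _) hij (measurable_const.sub hij)

theorem inducedDensityIntegrand_mem_unitInterval (hW : ∀ x y, W x y ∈ unitInterval)
    (x : ι → J₁) (y : κ → J₂) : inducedDensityIntegrand W E x y ∈ unitInterval := by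
  have hfac : ∀ i j, (if (i, j) ∈ E then W (x i) (y j) else 1 - W (x i) (y j)) ∈ unitInterval :=
    fun i j => ite_mem_unitInterval (hW _ _)
  exact ⟨Finset.prod_nonneg fun i _ => Finset.prod_nonneg fun j _ => (hfac i j).1,
    Finset.prod_le_one (fun i _ => Finset.prod_nonneg fun j _ => (hfac i j).1)
      fun i _ => Finset.prod_le_one (fun j _ => (hfac i j).1) fun j _ => (hfac i j).2⟩

theorem inducedDensityIntegrand_pos {x : ι → J₁} {y : κ → J₂}
    (h : ∀ i j, W (x i) (y j) ∈ Ioo 0 1) : 0 < inducedDensityIntegrand W E x y :=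
  Finset.prod_pos fun i _ => Finset.prod_pos fun j _ => (ite_mem_Ioo (h i j)).1

end Bigraphon

section Rows

variable {J₁ J₂ ι κ : Type*} [MeasurableSpace J₁] [MeasurableSpace J₂]
  {μ₁ : Measure J₁} {μ₂ : Measure J₂} [IsFiniteMeasure μ₂] {W : J₁ → J₂ → ℝ}

theorem exists_row_measure_Ioo_ne_zero (hW : Measurable (uncurry W))
    (hW01 : ∀ x y, W x y ∈ unitInterval)
    (h : ¬ ∀ᵐ p ∂μ₁.prod μ₂, W p.1 p.2 = 0 ∨ W p.1 p.2 = 1) :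
    ∃ x, μ₂ (W x ⁻¹' Ioo 0 1) ≠ 0 := by
  by_contra! hrows
  have hnull : μ₁.prod μ₂ {p | W p.1 p.2 ∈ Ioo 0 1} = 0 :=
    (Measure.measure_prod_null (hW measurableSet_Ioo)).2 (ae_of_all _ hrows)
  refine h (ae_iff.2 (measure_mono_null (fun p hp => ?_) hnull))
  obtain ⟨hne0, hne1⟩ := not_or.1 hp
  exact ⟨(hW01 p.1 p.2).1.lt_of_ne' hne0, (hW01 p.1 p.2).2.lt_of_ne hne1⟩

theorem measure_row_far_lt [PseudoMetricSpace J₁] (hW : Measurable (uncurry W))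
    (hW01 : ∀ x y, W x y ∈ unitInterval) (hdist : ∀ x x', dist x x' = ∫ y, |W x y - W x' y| ∂μ₂)
    {x x₀ : J₁} {ε η : ℝ} (hε : 0 < ε) (hx : dist x x₀ < ε * η) :
    μ₂ {y | ε ≤ |W x y - W x₀ y|} < ENNReal.ofReal η := by
  have hrow : ∀ x, Integrable (W x) μ₂ := fun x =>
    .of_bound (hW.comp measurable_prodMk_left).aestronglyMeasurable 1
      (ae_of_all _ fun y => by rw [Real.norm_of_nonneg (hW01 x y).1]; exact (hW01 x y).2)
  exact meas_ge_lt_ofReal_of_integral_lt (ae_of_all _ fun y => abs_nonneg _)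
    ((hrow x).sub (hrow x₀)).abs hε (hdist x x₀ ▸ hx)

theorem exists_ball_measure_diff_far_rows_ne_zero [PseudoMetricSpace J₁] [Fintype ι]
    (hW : Measurable (uncurry W)) (hW01 : ∀ x y, W x y ∈ unitInterval)
    (hdist : ∀ x x', dist x x' = ∫ y, |W x y - W x' y| ∂μ₂)
    (x₀ : J₁) {ε : ℝ} (hε : 0 < ε) {S : Set J₂} (hS : μ₂ S ≠ 0) :
    ∃ r > 0, ∀ x : ι → J₁, (∀ i, x i ∈ Metric.ball x₀ r) →
      μ₂ (S \ ⋃ i, {y | ε ≤ |W (x i) y - W x₀ y|}) ≠ 0 := by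
  have hSpos : 0 < μ₂.real S := ENNReal.toReal_pos hS (measure_ne_top μ₂ S)
  set η := μ₂.real S / (Fintype.card ι + 1)
  have hcard : (Fintype.card ι : ℝ) * η < μ₂.real S := by
    rw [mul_div_assoc', div_lt_iff₀ (by positivity)]
    linarith
  refine ⟨ε * η, by positivity, fun x hx => measure_diff_iUnion_ne_zero ?_⟩
  calc ∑ i, μ₂ {y | ε ≤ |W (x i) y - W x₀ y|}
      ≤ ∑ _i : ι, ENNReal.ofReal η :=
        Finset.sum_le_sum fun i _ => (measure_row_far_lt hW hW01 hdist hε (hx i)).le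
    _ = ENNReal.ofReal (Fintype.card ι * η) := by simp [ENNReal.ofReal_mul]
    _ < ENNReal.ofReal (μ₂.real S) := (ENNReal.ofReal_lt_ofReal_iff hSpos).2 hcard
    _ = μ₂ S := ofReal_measureReal

theorem integral_integral_inducedDensityIntegrand_pos [PseudoMetricSpace J₁] [Fintype ι]
    [Fintype κ] [DecidableEq ι] [DecidableEq κ] [IsFiniteMeasure μ₁] [μ₁.IsOpenPosMeasure]
    (hW : Measurable (uncurry W)) (hW01 : ∀ x y, W x y ∈ unitInterval)
    (hdist : ∀ x x', dist x x' = ∫ y, |W x y - W x' y| ∂μ₂)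
    {x₀ : J₁} {ε : ℝ} (hε : 0 < ε) (hS : μ₂ (W x₀ ⁻¹' Icc ε (1 - ε)) ≠ 0) (E : Finset (ι × κ)) :
    0 < ∫ x, ∫ y, inducedDensityIntegrand W E x y
      ∂Measure.pi (fun _ : κ => μ₂) ∂Measure.pi (fun _ : ι => μ₁) := by
  obtain ⟨r, hr, hnear⟩ :=
    exists_ball_measure_diff_far_rows_ne_zero (ι := ι) hW hW01 hdist x₀ hε hS
  refine integral_integral_pos_of_forall_mem (measurable_inducedDensityIntegrand E hW)
    (fun x y => (inducedDensityIntegrand_mem_unitInterval E hW01 x y).1)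
    (fun x y => (inducedDensityIntegrand_mem_unitInterval E hW01 x y).2)
    (measure_pi_univ_pi_ne_zero (Metric.measure_ball_pos μ₁ x₀ hr).ne') fun x hx h => ?_
  refine measure_pi_univ_pi_ne_zero (ι := κ) (hnear x fun i => hx i trivial)
    (measure_mono_null (fun y hy => ?_) h)
  refine (inducedDensityIntegrand_pos E fun i j => ?_).ne'
  obtain ⟨⟨hlo, hhi⟩, hnot_far⟩ := hy j trivial
  have hclose : |W (x i) (y j) - W x₀ (y j)| < ε :=
    not_le.1 fun hfar => hnot_far (mem_iUnion.2 ⟨i, hfar⟩)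
  rw [abs_lt] at hclose
  exact ⟨by linarith, by linarith⟩

end Rows

theorem thin_bigraphon_zero_one_valued_general
    {J₁ J₂ : Type*}
    [MetricSpace J₁]
    [MeasurableSpace J₁]
    [MeasurableSpace J₂]
    (μ₁ : Measure J₁) (μ₂ : Measure J₂)
    [IsProbabilityMeasure μ₁] [IsProbabilityMeasure μ₂]
    [μ₁.IsOpenPosMeasure]
    (W : J₁ → J₂ → ℝ)
    (hWmeas : Measurable (fun p : J₁ × J₂ => W p.1 p.2))
    (hW0 : ∀ x y, 0 ≤ W x y) (hW1 : ∀ x y, W x y ≤ 1)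
    (hdist₁ : ∀ x x' : J₁, dist x x' = ∫ z, |W x z - W x' z| ∂μ₂)
    (hthin : ∃ (k₁ k₂ : ℕ) (E : Finset (Fin k₁ × Fin k₂)),
      (∫ x : Fin k₁ → J₁, ∫ y : Fin k₂ → J₂,
        (∏ i, ∏ j, if (i, j) ∈ E then W (x i) (y j) else 1 - W (x i) (y j))
          ∂(Measure.pi fun _ => μ₂) ∂(Measure.pi fun _ => μ₁)) = 0) :
    ∀ᵐ p ∂(μ₁.prod μ₂), W p.1 p.2 = 0 ∨ W p.1 p.2 = 1 := by
  by_contra hnot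
  have hW01 : ∀ x y, W x y ∈ unitInterval := fun x y => ⟨hW0 x y, hW1 x y⟩
  obtain ⟨x₀, hx₀⟩ := exists_row_measure_Ioo_ne_zero hWmeas hW01 hnot
  obtain ⟨ε, hε, hS⟩ := exists_measure_preimage_Icc_ne_zero hx₀
  obtain ⟨k₁, k₂, E, hzero⟩ := hthin
  exact (integral_integral_inducedDensityIntegrand_pos hWmeas hW01 hdist₁ hε hS E).ne' hzero

/-- If a pure bigraphon `(J₁,J₂,W)` is thin — there is a bigraph `F` with
`t^b_ind(F,W) = 0` — then `W` is 0-1 valued almost everywhere. -/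
theorem thin_bigraphon_zero_one_valued
    {J₁ J₂ : Type*}
    [MetricSpace J₁] [CompleteSpace J₁] [TopologicalSpace.SeparableSpace J₁]
    [MeasurableSpace J₁] [BorelSpace J₁]
    [MetricSpace J₂] [CompleteSpace J₂] [TopologicalSpace.SeparableSpace J₂]
    [MeasurableSpace J₂] [BorelSpace J₂]
    (μ₁ : Measure J₁) (μ₂ : Measure J₂)
    [IsProbabilityMeasure μ₁] [IsProbabilityMeasure μ₂]
    [μ₁.IsOpenPosMeasure] [μ₂.IsOpenPosMeasure]
    (W : J₁ → J₂ → ℝ)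
    (hWmeas : Measurable (fun p : J₁ × J₂ => W p.1 p.2))
    (hW0 : ∀ x y, 0 ≤ W x y) (hW1 : ∀ x y, W x y ≤ 1)
    (hdist₁ : ∀ x x' : J₁, dist x x' = ∫ z, |W x z - W x' z| ∂μ₂)
    (hdist₂ : ∀ y y' : J₂, dist y y' = ∫ z, |W z y - W z y'| ∂μ₁)
    (hthin : ∃ (k₁ k₂ : ℕ) (E : Finset (Fin k₁ × Fin k₂)),
      (∫ x : Fin k₁ → J₁, ∫ y : Fin k₂ → J₂,
        (∏ i, ∏ j, if (i, j) ∈ E then W (x i) (y j) else 1 - W (x i) (y j))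
          ∂(Measure.pi fun _ => μ₂) ∂(Measure.pi fun _ => μ₁)) = 0) :
    ∀ᵐ p ∂(μ₁.prod μ₂), W p.1 p.2 = 0 ∨ W p.1 p.2 = 1 :=
  thin_bigraphon_zero_one_valued_general μ₁ μ₂ W hWmeas hW0 hW1 hdist₁ hthin
end

section
/- Let (J,W) be a graphon and S ⊆ J a finite set that is an average ε-net for the similarity metric r_{W∘W}, i.e., ∫_J r_{W∘W}(x,S) dπ(x) ≤ ε. Then the partition P of J into the Voronoi cells of S satisfies ‖W − W_P‖_□ ≤ 8√ε; i.e., the Voronoi cells form a weak regularity partition with error 8√ε. -/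
/-!
Write `T(p, q) = ∫ p · W q`, a symmetric bilinear form, and `E` for averaging over the Voronoi
cells. Since `W_P` is the cell average of `W`,
`∫_{A×B} (W - W_P) = T(1_A - E 1_A, 1_B) + T(1_B - E 1_B, E 1_A)`,
and each term is at most `√ε`. Indeed, if `p` has mean zero on every cell and `|p|, |q| ≤ 1`,
then `|T(p, q)| = |⟨q, W p⟩| ≤ ‖W p‖₁ ≤ ‖W p‖₂`, and
`‖W p‖₂² = ⟨p, W² p⟩ = ⟨p, W² p - (W² p) ∘ c⟩` because `p` is orthogonal to functions constant
on cells. Finally `(W² p)(a) - (W² p)(b) = ⟨p, W (W(·, a) - W(·, b))⟩` is at most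
`r_{W∘W}(a, b)` in absolute value, so `‖W p‖₂² ≤ ∫ r_{W∘W}(x, c x) ≤ ε`.
-/

open MeasureTheory Set

noncomputable section

variable {J : Type*} [MeasurableSpace J] {μ : Measure J}

lemma integrable_of_abs_le [IsFiniteMeasure μ] {f : J → ℝ} {C : ℝ} (hf : Measurable f)
    (hfC : ∀ x, |f x| ≤ C) : Integrable f μ :=
  .of_bound hf.aestronglyMeasurable C (ae_of_all _ hfC)

lemma abs_integral_le_of_abs_le [IsProbabilityMeasure μ] {f : J → ℝ} {C : ℝ}
    (hf : ∀ x, |f x| ≤ C) : |∫ x, f x ∂μ| ≤ C := by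
  simpa using norm_integral_le_of_norm_le_const (μ := μ) (f := f) (ae_of_all _ hf)

lemma abs_integral_mul_le_integral_abs {p f : J → ℝ} (hp1 : ∀ x, |p x| ≤ 1)
    (hf : Integrable f μ) : |∫ x, p x * f x ∂μ| ≤ ∫ x, |f x| ∂μ :=
  norm_integral_le_of_norm_le (f := fun x => p x * f x) hf.abs (ae_of_all _ fun x => by
    simpa [abs_mul] using mul_le_of_le_one_left (abs_nonneg (f x)) (hp1 x))

lemma sq_integral_abs_le_integral_sq [IsProbabilityMeasure μ] {f : J → ℝ} (hf : MemLp f 2 μ) :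
    (∫ x, |f x| ∂μ) ^ 2 ≤ ∫ x, f x ^ 2 ∂μ := by
  have hvar := ProbabilityTheory.variance_nonneg |f| μ
  rw [ProbabilityTheory.variance_eq_sub hf.abs] at hvar
  simpa [sq_abs] using hvar

def kernelOp (μ : Measure J) (W : J → J → ℝ) (f : J → ℝ) (x : J) : ℝ :=
  ∫ y, W x y * f y ∂μ

/-- The similarity distance `r_{W∘W}(a, b)`. -/
def simDist (μ : Measure J) (W : J → J → ℝ) (a b : J) : ℝ :=
  ∫ x, |kernelOp μ W (fun y => W y a - W y b) x| ∂μ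

section Kernel

variable {W : J → J → ℝ}

lemma integrable_kernel_row [IsFiniteMeasure μ] (hW : Measurable (Function.uncurry W))
    (hW1 : ∀ x y, |W x y| ≤ 1) (x : J) : Integrable (W x) μ :=
  integrable_of_abs_le (hW.comp measurable_prodMk_left) (hW1 x)

lemma aestronglyMeasurable_kernelOp [SFinite μ] (hW : Measurable (Function.uncurry W))
    {f : J → ℝ} (hf : AEStronglyMeasurable f μ) : AEStronglyMeasurable (kernelOp μ W f) μ :=
  (hW.aestronglyMeasurable.mul hf.comp_snd).integral_prod_right'

lemma abs_kernelOp_le (hW1 : ∀ x y, |W x y| ≤ 1) {f : J → ℝ} (hf : Integrable f μ) (x : J) :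
    |kernelOp μ W f x| ≤ ∫ y, |f y| ∂μ :=
  abs_integral_mul_le_integral_abs (hW1 x) hf

lemma integrable_mul_kernelOp [SFinite μ] (hW : Measurable (Function.uncurry W))
    (hW1 : ∀ x y, |W x y| ≤ 1) {p q : J → ℝ} (hp : Integrable p μ) (hq : Integrable q μ) :
    Integrable (fun x => p x * kernelOp μ W q x) μ :=
  hp.mul_bdd (aestronglyMeasurable_kernelOp hW hq.1) (ae_of_all _ (abs_kernelOp_le hW1 hq))

lemma integrable_kernelOp [IsFiniteMeasure μ] (hW : Measurable (Function.uncurry W))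
    (hW1 : ∀ x y, |W x y| ≤ 1) {q : J → ℝ} (hq : Integrable q μ) :
    Integrable (kernelOp μ W q) μ := by
  simpa using integrable_mul_kernelOp hW hW1 (integrable_const 1) hq

lemma integral_mul_kernelOp_comm [SFinite μ] (hW : Measurable (Function.uncurry W))
    (hWs : ∀ x y, W x y = W y x) (hW1 : ∀ x y, |W x y| ≤ 1) {p q : J → ℝ}
    (hp : Integrable p μ) (hq : Integrable q μ) :
    ∫ x, p x * kernelOp μ W q x ∂μ = ∫ x, q x * kernelOp μ W p x ∂μ := by
  have hint : Integrable (Function.uncurry fun x y => p x * (W x y * q y)) (μ.prod μ) := by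
    refine (hp.mul_prod hq).mono
      (hp.1.comp_fst.mul (hW.aestronglyMeasurable.mul hq.1.comp_snd)) (ae_of_all _ fun z => ?_)
    simp only [Function.uncurry, norm_mul, Real.norm_eq_abs]
    have := mul_le_of_le_one_left (abs_nonneg (q z.2)) (hW1 z.1 z.2)
    gcongr
  calc ∫ x, p x * kernelOp μ W q x ∂μ = ∫ x, ∫ y, p x * (W x y * q y) ∂μ ∂μ := by
        simp only [kernelOp, integral_const_mul]
    _ = ∫ y, ∫ x, p x * (W x y * q y) ∂μ ∂μ := integral_integral_swap hint
    _ = ∫ y, q y * kernelOp μ W p y ∂μ := by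
        simp only [kernelOp, ← integral_const_mul]
        refine integral_congr_ae (ae_of_all _ fun y =>
          integral_congr_ae (ae_of_all _ fun x => ?_))
        simp only [hWs x y]
        ring

lemma integral_sub_mul_kernelOp [SFinite μ] (hW : Measurable (Function.uncurry W))
    (hW1 : ∀ x y, |W x y| ≤ 1) {p p' q : J → ℝ} (hp : Integrable p μ) (hp' : Integrable p' μ)
    (hq : Integrable q μ) :
    ∫ x, (p x - p' x) * kernelOp μ W q x ∂μ =
      ∫ x, p x * kernelOp μ W q x ∂μ - ∫ x, p' x * kernelOp μ W q x ∂μ := by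
  simp only [sub_mul]
  exact integral_sub (integrable_mul_kernelOp hW hW1 hp hq)
    (integrable_mul_kernelOp hW hW1 hp' hq)

lemma measurable_simDist_left [SFinite μ] (hW : Measurable (Function.uncurry W)) (b : J) :
    Measurable fun a => simDist μ W a b := by
  have hT : Measurable fun z : J × J => kernelOp μ W (fun y => W y z.1 - W y b) z.2 :=
    (StronglyMeasurable.integral_prod_right' (f := fun q : (J × J) × J =>
      W q.1.2 q.2 * (W q.2 q.1.1 - W q.2 b)) (by fun_prop)).measurable
  exact (hT.abs.stronglyMeasurable.integral_prod_right' (ν := μ)).measurable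

lemma abs_simDist_le_two [IsProbabilityMeasure μ] (hW1 : ∀ x y, |W x y| ≤ 1) (a b : J) :
    |simDist μ W a b| ≤ 2 := by
  refine abs_integral_le_of_abs_le fun x => (abs_abs _).trans_le
    (abs_integral_le_of_abs_le fun y => ?_)
  rw [abs_mul]
  calc |W x y| * |W y a - W y b| ≤ 1 * (1 + 1) :=
        mul_le_mul (hW1 x y) ((abs_sub _ _).trans (add_le_add (hW1 y a) (hW1 y b)))
          (abs_nonneg _) zero_le_one
    _ = 2 := by norm_num

lemma abs_kernelOp_kernelOp_sub_le_simDist [IsFiniteMeasure μ]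
    (hW : Measurable (Function.uncurry W)) (hWs : ∀ x y, W x y = W y x)
    (hW1 : ∀ x y, |W x y| ≤ 1) {p : J → ℝ} (hp : Integrable p μ) (hp1 : ∀ x, |p x| ≤ 1)
    (a b : J) :
    |kernelOp μ W (kernelOp μ W p) a - kernelOp μ W (kernelOp μ W p) b| ≤ simDist μ W a b := by
  have hd : Integrable (fun y => W y a - W y b) μ :=
    integrable_of_abs_le (by fun_prop) fun y =>
      (abs_sub _ _).trans (add_le_add (hW1 y a) (hW1 y b))
  have hdual : kernelOp μ W (kernelOp μ W p) a - kernelOp μ W (kernelOp μ W p) b =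
      ∫ y, p y * kernelOp μ W (fun y => W y a - W y b) y ∂μ :=
    calc _ = ∫ y, (W a y - W b y) * kernelOp μ W p y ∂μ :=
          (integral_sub_mul_kernelOp hW hW1 (integrable_kernel_row hW hW1 a)
            (integrable_kernel_row hW hW1 b) hp).symm
      _ = ∫ y, (W y a - W y b) * kernelOp μ W p y ∂μ :=
          integral_congr_ae (ae_of_all _ fun y => by simp only [hWs a y, hWs b y])
      _ = _ := integral_mul_kernelOp_comm hW hWs hW1 hd hp
  rw [hdual]
  exact abs_integral_mul_le_integral_abs hp1 (integrable_kernelOp hW hW1 hd)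

end Kernel

section Cells

variable {ι : Type*} {S : Finset ι} {c : J → ι}

lemma measurable_cellwise {β : Type*} [MeasurableSpace β] (hcS : ∀ x, c x ∈ S)
    (hC : ∀ s ∈ S, MeasurableSet {z | c z = s}) {F : J → ι → β}
    (hF : ∀ s ∈ S, Measurable (F · s)) : Measurable fun x => F x (c x) := by
  intro U hU
  have hpre : (fun x => F x (c x)) ⁻¹' U = ⋃ s ∈ S, {z | c z = s} ∩ (F · s) ⁻¹' U := by
    ext x
    simp only [mem_preimage, mem_iUnion, mem_inter_iff, mem_ofPred_eq, exists_prop]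
    exact ⟨fun hx => ⟨c x, hcS x, rfl, hx⟩, by rintro ⟨s, -, rfl, hx⟩; exact hx⟩
  rw [hpre]
  exact S.measurableSet_biUnion fun s hs => (hC s hs).inter (hF s hs hU)

lemma integrable_comp_cell {ν : Measure J} [IsFiniteMeasure ν] (hcS : ∀ x, c x ∈ S)
    (hC : ∀ s ∈ S, MeasurableSet {z | c z = s}) (g : ι → ℝ) :
    Integrable (fun x => g (c x)) ν :=
  .of_bound (measurable_cellwise (F := fun _ => g) hcS hC fun _ _ =>
      measurable_const).aestronglyMeasurable
    (∑ s ∈ S, |g s|) (ae_of_all _ fun x =>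
      Finset.single_le_sum (f := fun s => |g s|) (fun _ _ => abs_nonneg _) (hcS x))

lemma integral_mul_comp_cell {ν : Measure J} (hcS : ∀ x, c x ∈ S)
    (hC : ∀ s ∈ S, MeasurableSet {z | c z = s}) {f : J → ℝ} (hf : Integrable f ν) (g : ι → ℝ) :
    ∫ x, f x * g (c x) ∂ν = ∑ s ∈ S, g s * ∫ x in {z | c z = s}, f x ∂ν := by
  have hcover : (⋃ s ∈ S, {z | c z = s}) = univ :=
    eq_univ_of_forall fun x => mem_biUnion (hcS x) rfl
  have hdisj : (S : Set ι).PairwiseDisjoint fun s => {z | c z = s} :=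
    fun s _ t _ hst => disjoint_left.2 fun x hs ht => hst (hs.symm.trans ht)
  have hcell : ∀ s ∈ S, EqOn (fun x => f x * g (c x)) (fun x => f x * g s) {z | c z = s} :=
    fun s _ x hx => by simp only [show c x = s from hx]
  rw [← setIntegral_univ, ← hcover, integral_biUnion_finset S hC hdisj fun s hs =>
    (hf.mul_const (g s)).integrableOn.congr_fun (hcell s hs).symm (hC s hs)]
  refine Finset.sum_congr rfl fun s hs => ?_
  rw [setIntegral_congr_fun (hC s hs) (hcell s hs), integral_mul_const, mul_comm]

lemma setIntegral_comp_cell [IsFiniteMeasure μ] (hcS : ∀ x, c x ∈ S)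
    (hC : ∀ s ∈ S, MeasurableSet {z | c z = s}) (X : Set J) (g : ι → ℝ) :
    ∫ x in X, g (c x) ∂μ = ∑ s ∈ S, g s * μ.real ({z | c z = s} ∩ X) := by
  have h := integral_mul_comp_cell (ν := μ.restrict X) hcS hC (integrable_const 1) g
  simp only [one_mul, integral_const, smul_eq_mul, mul_one] at h
  rw [h]
  exact Finset.sum_congr rfl fun s hs => by
    rw [measureReal_restrict_apply_univ, measureReal_restrict_apply (hC s hs)]

/-- Division by zero makes this `0` on a null cell. -/
def cellMean (μ : Measure J) (c : J → ι) (f : J → ℝ) (s : ι) : ℝ :=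
  (∫ x in {z | c z = s}, f x ∂μ) / μ.real {z | c z = s}

def cellAverage (μ : Measure J) (c : J → ι) (f : J → ℝ) (x : J) : ℝ :=
  cellMean μ c f (c x)

lemma measurable_cellAverage (hcS : ∀ x, c x ∈ S) (hC : ∀ s ∈ S, MeasurableSet {z | c z = s})
    (f : J → ℝ) : Measurable (cellAverage μ c f) :=
  measurable_cellwise (F := fun _ => cellMean μ c f) hcS hC fun _ _ => measurable_const

lemma integrable_cellAverage [IsFiniteMeasure μ] (hcS : ∀ x, c x ∈ S)
    (hC : ∀ s ∈ S, MeasurableSet {z | c z = s}) (f : J → ℝ) :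
    Integrable (cellAverage μ c f) μ :=
  integrable_comp_cell hcS hC (cellMean μ c f)

lemma setIntegral_sub_cellAverage_eq_zero [IsFiniteMeasure μ] (hcS : ∀ x, c x ∈ S)
    (hC : ∀ s ∈ S, MeasurableSet {z | c z = s}) {f : J → ℝ} (hf : Integrable f μ) {s : ι}
    (hs : s ∈ S) : ∫ x in {z | c z = s}, (f x - cellAverage μ c f x) ∂μ = 0 := by
  rw [integral_sub hf.integrableOn (integrable_cellAverage hcS hC f).integrableOn,
    setIntegral_congr_fun (hC s hs) (f := cellAverage μ c f) (g := fun _ => cellMean μ c f s)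
      fun x (hx : c x = s) => by simp only [cellAverage, hx],
    setIntegral_const, smul_eq_mul, cellMean]
  rcases eq_or_ne (μ.real {z | c z = s}) 0 with h | h
  · rw [setIntegral_measure_zero _ ((measureReal_eq_zero_iff (measure_ne_top μ _)).1 h)]
    simp
  · rw [mul_div_cancel₀ _ h, sub_self]

lemma cellMean_indicator_one {X : Set J} (hX : MeasurableSet X) (s : ι) :
    cellMean μ c (X.indicator 1) s = μ.real ({z | c z = s} ∩ X) / μ.real {z | c z = s} := by
  rw [cellMean, setIntegral_indicator hX]
  simp

lemma cellAverage_indicator_one_mem_Icc [IsFiniteMeasure μ] {X : Set J} (hX : MeasurableSet X)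
    (x : J) : cellAverage μ c (X.indicator 1) x ∈ Icc 0 1 := by
  rw [cellAverage, cellMean_indicator_one hX (c x)]
  exact ⟨div_nonneg measureReal_nonneg measureReal_nonneg,
    div_le_one_of_le₀ (measureReal_mono inter_subset_left) measureReal_nonneg⟩

lemma abs_indicator_one_sub_cellAverage_le_one [IsFiniteMeasure μ] {X : Set J}
    (hX : MeasurableSet X) (x : J) :
    |X.indicator 1 x - cellAverage μ c (X.indicator 1) x| ≤ 1 := by
  have h := cellAverage_indicator_one_mem_Icc (μ := μ) (c := c) hX x
  by_cases hx : x ∈ X <;> simp only [hx, indicator_of_mem, indicator_of_notMem, not_false_eq_true,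
    Pi.one_apply] <;> exact abs_le.2 ⟨by linarith [h.1, h.2], by linarith [h.1, h.2]⟩

end Cells

section StepKernel

variable {W : J → J → ℝ} {ι : Type*} {S : Finset ι} {c : J → ι}

def cellPairMean (μ : Measure J) (c : J → ι) (W : J → J → ℝ) (s t : ι) : ℝ :=
  (∫ u in {z | c z = s}, ∫ v in {z | c z = t}, W u v ∂μ ∂μ) /
    (μ.real {z | c z = s} * μ.real {z | c z = t})

/-- The averaged kernel `W_P` of the partition into the fibres of `c`. -/
def stepKernel (μ : Measure J) (c : J → ι) (W : J → J → ℝ) (x y : J) : ℝ :=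
  cellPairMean μ c W (c x) (c y)

lemma integrable_setIntegral_kernel [IsFiniteMeasure μ] (hW : Measurable (Function.uncurry W))
    (hW1 : ∀ x y, |W x y| ≤ 1) (T : Set J) : Integrable (fun u => ∫ v in T, W u v ∂μ) μ :=
  .of_bound (hW.stronglyMeasurable.integral_prod_right (ν := μ.restrict T)).aestronglyMeasurable
    (1 * (μ.restrict T).real univ)
    (ae_of_all _ fun u => norm_integral_le_of_norm_le_const (ae_of_all _ (hW1 u)))

lemma setIntegral_setIntegral_eq_integral_indicator_mul_kernelOp {A B : Set J}
    (hA : MeasurableSet A) (hB : MeasurableSet B) :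
    ∫ u in A, ∫ v in B, W u v ∂μ ∂μ =
      ∫ u, A.indicator 1 u * kernelOp μ W (B.indicator 1) u ∂μ := by
  rw [← integral_indicator hA]
  refine integral_congr_ae (ae_of_all _ fun u => ?_)
  simp only [kernelOp, ← integral_indicator hB]
  by_cases hu : u ∈ A
  · simp only [indicator_of_mem hu, Pi.one_apply, one_mul]
    refine integral_congr_ae (ae_of_all _ fun v => ?_)
    by_cases hv : v ∈ B <;> simp [hv]
  · simp [hu]

lemma setIntegral_setIntegral_stepKernel [IsFiniteMeasure μ] (hcS : ∀ x, c x ∈ S)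
    (hC : ∀ s ∈ S, MeasurableSet {z | c z = s}) (A B : Set J) :
    ∫ u in A, ∫ v in B, stepKernel μ c W u v ∂μ ∂μ = ∑ s ∈ S, ∑ t ∈ S,
      μ.real ({z | c z = s} ∩ A) * μ.real ({z | c z = t} ∩ B) * cellPairMean μ c W s t := by
  simp only [stepKernel]
  rw [setIntegral_comp_cell hcS hC A fun s => ∫ v in B, cellPairMean μ c W s (c v) ∂μ]
  refine Finset.sum_congr rfl fun s _ => ?_
  rw [setIntegral_comp_cell hcS hC B, Finset.sum_mul]
  exact Finset.sum_congr rfl fun t _ => by ring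

lemma integral_cellAverage_mul_kernelOp_cellAverage [IsFiniteMeasure μ]
    (hW : Measurable (Function.uncurry W)) (hW1 : ∀ x y, |W x y| ≤ 1) (hcS : ∀ x, c x ∈ S)
    (hC : ∀ s ∈ S, MeasurableSet {z | c z = s}) (f g : J → ℝ) :
    ∫ u, cellAverage μ c f u * kernelOp μ W (cellAverage μ c g) u ∂μ = ∑ s ∈ S, ∑ t ∈ S,
      cellMean μ c f s * cellMean μ c g t *
        ∫ u in {z | c z = s}, ∫ v in {z | c z = t}, W u v ∂μ ∂μ := by
  have hinner : ∀ u, kernelOp μ W (cellAverage μ c g) u =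
      ∑ t ∈ S, cellMean μ c g t * ∫ v in {z | c z = t}, W u v ∂μ := fun u =>
    integral_mul_comp_cell hcS hC (integrable_kernel_row hW hW1 u) (cellMean μ c g)
  have hterm : ∀ t, Integrable (fun u => cellMean μ c g t * ∫ v in {z | c z = t}, W u v ∂μ) μ :=
    fun t => (integrable_setIntegral_kernel hW hW1 _).const_mul _
  simp only [hinner, cellAverage, mul_comm (cellMean μ c f _)]
  rw [integral_mul_comp_cell hcS hC (integrable_finsetSum S fun t _ => hterm t)]
  refine Finset.sum_congr rfl fun s _ => ?_
  rw [integral_finsetSum S fun t _ => (hterm t).integrableOn, Finset.mul_sum]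
  refine Finset.sum_congr rfl fun t _ => ?_
  rw [integral_const_mul]
  ring

lemma setIntegral_setIntegral_stepKernel_eq [IsFiniteMeasure μ]
    (hW : Measurable (Function.uncurry W)) (hW1 : ∀ x y, |W x y| ≤ 1) (hcS : ∀ x, c x ∈ S)
    (hC : ∀ s ∈ S, MeasurableSet {z | c z = s}) {A B : Set J} (hA : MeasurableSet A)
    (hB : MeasurableSet B) :
    ∫ u in A, ∫ v in B, stepKernel μ c W u v ∂μ ∂μ =
      ∫ u, cellAverage μ c (A.indicator 1) u *
        kernelOp μ W (cellAverage μ c (B.indicator 1)) u ∂μ := by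
  rw [setIntegral_setIntegral_stepKernel hcS hC,
    integral_cellAverage_mul_kernelOp_cellAverage hW hW1 hcS hC]
  refine Finset.sum_congr rfl fun s _ => Finset.sum_congr rfl fun t _ => ?_
  rw [cellMean_indicator_one hA, cellMean_indicator_one hB, cellPairMean]
  ring

lemma setIntegral_setIntegral_sub_stepKernel [IsFiniteMeasure μ]
    (hW : Measurable (Function.uncurry W)) (hWs : ∀ x y, W x y = W y x)
    (hW1 : ∀ x y, |W x y| ≤ 1) (hcS : ∀ x, c x ∈ S) (hC : ∀ s ∈ S, MeasurableSet {z | c z = s})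
    {A B : Set J} (hA : MeasurableSet A) (hB : MeasurableSet B) :
    ∫ u in A, ∫ v in B, (W u v - stepKernel μ c W u v) ∂μ ∂μ =
      ∫ u, (A.indicator 1 u - cellAverage μ c (A.indicator 1) u) *
          kernelOp μ W (B.indicator 1) u ∂μ +
        ∫ u, (B.indicator 1 u - cellAverage μ c (B.indicator 1) u) *
          kernelOp μ W (cellAverage μ c (A.indicator 1)) u ∂μ := by
  have hind : ∀ {X : Set J}, MeasurableSet X → Integrable (X.indicator (1 : J → ℝ)) μ :=
    fun hX => (integrable_const 1).indicator hX
  have havg : ∀ X : Set J, Integrable (cellAverage μ c (X.indicator 1)) μ :=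
    fun X => integrable_cellAverage hcS hC _
  have hsplit : ∫ u in A, ∫ v in B, (W u v - stepKernel μ c W u v) ∂μ ∂μ =
      ∫ u in A, ∫ v in B, W u v ∂μ ∂μ - ∫ u in A, ∫ v in B, stepKernel μ c W u v ∂μ ∂μ := by
    have hstep : Integrable (fun u => ∫ v in B, stepKernel μ c W u v ∂μ) μ :=
      integrable_comp_cell hcS hC fun s => ∫ v in B, cellPairMean μ c W s (c v) ∂μ
    rw [← integral_sub (integrable_setIntegral_kernel hW hW1 B).integrableOn hstep.integrableOn]
    exact integral_congr_ae (ae_of_all _ fun u =>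
      integral_sub (integrable_kernel_row hW hW1 u).integrableOn
        (integrable_comp_cell hcS hC (cellPairMean μ c W (c u))).integrableOn)
  rw [hsplit, setIntegral_setIntegral_eq_integral_indicator_mul_kernelOp hA hB,
    setIntegral_setIntegral_stepKernel_eq hW hW1 hcS hC hA hB,
    integral_sub_mul_kernelOp hW hW1 (hind hA) (havg A) (hind hB),
    integral_sub_mul_kernelOp hW hW1 (hind hB) (havg B) (havg A),
    integral_mul_kernelOp_comm hW hWs hW1 (hind hB) (havg A),
    integral_mul_kernelOp_comm hW hWs hW1 (havg B) (havg A)]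
  ring

end StepKernel

section MainEstimate

variable {W : J → J → ℝ} {S : Finset J} {c : J → J} [IsProbabilityMeasure μ]

lemma integrable_simDist_cell (hW : Measurable (Function.uncurry W)) (hW1 : ∀ x y, |W x y| ≤ 1)
    (hcS : ∀ x, c x ∈ S) (hC : ∀ s ∈ S, MeasurableSet {z | c z = s}) :
    Integrable (fun x => simDist μ W x (c x)) μ :=
  integrable_of_abs_le (measurable_cellwise hcS hC fun s _ => measurable_simDist_left hW s)
    fun x => abs_simDist_le_two hW1 x (c x)

lemma integral_sq_kernelOp_le_integral_simDist (hW : Measurable (Function.uncurry W))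
    (hWs : ∀ x y, W x y = W y x) (hW1 : ∀ x y, |W x y| ≤ 1) (hcS : ∀ x, c x ∈ S)
    (hC : ∀ s ∈ S, MeasurableSet {z | c z = s}) {p : J → ℝ} (hp : Measurable p)
    (hp1 : ∀ x, |p x| ≤ 1) (hp0 : ∀ s ∈ S, ∫ x in {z | c z = s}, p x ∂μ = 0) :
    ∫ x, kernelOp μ W p x ^ 2 ∂μ ≤ ∫ x, simDist μ W x (c x) ∂μ := by
  set h := kernelOp μ W p
  set g := kernelOp μ W h
  have hpi : Integrable p μ := integrable_of_abs_le hp hp1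
  have hhi : Integrable h μ := integrable_kernelOp hW hW1 hpi
  have hgc : Integrable (fun x => g (c x)) μ := integrable_comp_cell hcS hC g
  have hsq : ∫ x, h x ^ 2 ∂μ = ∫ x, p x * g x ∂μ := by
    simp only [sq]
    exact integral_mul_kernelOp_comm hW hWs hW1 hhi hpi
  have hperp : ∫ x, p x * g (c x) ∂μ = 0 := by
    rw [integral_mul_comp_cell hcS hC hpi]
    exact Finset.sum_eq_zero fun s hs => by rw [hp0 s hs, mul_zero]
  calc ∫ x, h x ^ 2 ∂μ = ∫ x, p x * (g x - g (c x)) ∂μ := by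
        simp only [mul_sub]
        rw [integral_sub (integrable_mul_kernelOp hW hW1 hpi hhi)
          (hgc.bdd_mul hp.aestronglyMeasurable (ae_of_all _ hp1)), hperp, sub_zero, hsq]
    _ ≤ ∫ x, |g x - g (c x)| ∂μ :=
        (le_abs_self _).trans <|
          abs_integral_mul_le_integral_abs hp1 ((integrable_kernelOp hW hW1 hhi).sub hgc)
    _ ≤ ∫ x, simDist μ W x (c x) ∂μ :=
        integral_mono ((integrable_kernelOp hW hW1 hhi).sub hgc).abs
          (integrable_simDist_cell hW hW1 hcS hC) fun x =>
            abs_kernelOp_kernelOp_sub_le_simDist hW hWs hW1 hpi hp1 x (c x)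

lemma abs_integral_mul_kernelOp_le_sqrt (hW : Measurable (Function.uncurry W))
    (hWs : ∀ x y, W x y = W y x) (hW1 : ∀ x y, |W x y| ≤ 1) (hcS : ∀ x, c x ∈ S)
    (hC : ∀ s ∈ S, MeasurableSet {z | c z = s}) {p q : J → ℝ} (hp : Measurable p)
    (hq : Measurable q) (hp1 : ∀ x, |p x| ≤ 1) (hq1 : ∀ x, |q x| ≤ 1)
    (hp0 : ∀ s ∈ S, ∫ x in {z | c z = s}, p x ∂μ = 0) :
    |∫ x, p x * kernelOp μ W q x ∂μ| ≤ √(∫ x, simDist μ W x (c x) ∂μ) := by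
  have hpi : Integrable p μ := integrable_of_abs_le hp hp1
  have hh : MemLp (kernelOp μ W p) 2 μ :=
    .of_bound (aestronglyMeasurable_kernelOp hW hpi.1) _ (ae_of_all _ (abs_kernelOp_le hW1 hpi))
  rw [integral_mul_kernelOp_comm hW hWs hW1 hpi (integrable_of_abs_le hq hq1)]
  calc |∫ x, q x * kernelOp μ W p x ∂μ| ≤ ∫ x, |kernelOp μ W p x| ∂μ :=
        abs_integral_mul_le_integral_abs hq1 (hh.integrable one_le_two)
    _ ≤ √(∫ x, kernelOp μ W p x ^ 2 ∂μ) :=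
        (le_abs_self _).trans (Real.abs_le_sqrt (sq_integral_abs_le_integral_sq hh))
    _ ≤ √(∫ x, simDist μ W x (c x) ∂μ) :=
        Real.sqrt_le_sqrt (integral_sq_kernelOp_le_integral_simDist hW hWs hW1 hcS hC hp hp1 hp0)

lemma abs_setIntegral_setIntegral_sub_stepKernel_le (hW : Measurable (Function.uncurry W))
    (hWs : ∀ x y, W x y = W y x) (hW1 : ∀ x y, |W x y| ≤ 1) (hcS : ∀ x, c x ∈ S)
    (hC : ∀ s ∈ S, MeasurableSet {z | c z = s}) {A B : Set J} (hA : MeasurableSet A)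
    (hB : MeasurableSet B) :
    |∫ u in A, ∫ v in B, (W u v - stepKernel μ c W u v) ∂μ ∂μ| ≤
      2 * √(∫ x, simDist μ W x (c x) ∂μ) := by
  have hind : ∀ {X : Set J}, MeasurableSet X → Measurable (X.indicator (1 : J → ℝ)) :=
    fun hX => measurable_const.indicator hX
  have hmean0 : ∀ {X : Set J}, MeasurableSet X → ∀ s ∈ S,
      ∫ x in {z | c z = s}, (X.indicator 1 x - cellAverage μ c (X.indicator 1) x) ∂μ = 0 :=
    fun hX _ hs =>
      setIntegral_sub_cellAverage_eq_zero hcS hC ((integrable_const 1).indicator hX) hs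
  have hB1 : ∀ x, |B.indicator (1 : J → ℝ) x| ≤ 1 := fun x => by
    by_cases hx : x ∈ B <;> simp [hx]
  have hA1 : ∀ x, |cellAverage μ c (A.indicator 1) x| ≤ 1 := fun x =>
    have h := cellAverage_indicator_one_mem_Icc (μ := μ) (c := c) hA x
    (abs_of_nonneg h.1).trans_le h.2
  rw [setIntegral_setIntegral_sub_stepKernel hW hWs hW1 hcS hC hA hB, two_mul]
  exact (abs_add_le _ _).trans (add_le_add
    (abs_integral_mul_kernelOp_le_sqrt hW hWs hW1 hcS hC
      ((hind hA).sub (measurable_cellAverage hcS hC _)) (hind hB)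
      (abs_indicator_one_sub_cellAverage_le_one hA) hB1 (hmean0 hA))
    (abs_integral_mul_kernelOp_le_sqrt hW hWs hW1 hcS hC
      ((hind hB).sub (measurable_cellAverage hcS hC _)) (measurable_cellAverage hcS hC _)
      (abs_indicator_one_sub_cellAverage_le_one hB) hA1 (hmean0 hB)))

end MainEstimate

end

theorem voronoi_cells_weak_regularity_general
    {J : Type*} [MeasurableSpace J] (μ : Measure J) [IsProbabilityMeasure μ]
    (W : J → J → ℝ)
    (hWmeas : Measurable (fun p : J × J => W p.1 p.2))
    (hWsymm : ∀ x y, W x y = W y x)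
    (hW0 : ∀ x y, 0 ≤ W x y) (hW1 : ∀ x y, W x y ≤ 1)
    (simdist : J → J → ℝ)
    (hsim : ∀ a b, simdist a b = ∫ x, |∫ y, W x y * (W y a - W y b) ∂μ| ∂μ)
    (S : Finset J)
    -- `c` assigns to each point the center of its Voronoi cell
    (c : J → J) (hcS : ∀ x, c x ∈ S)
    (hcellmeas : ∀ s ∈ S, MeasurableSet {z | c z = s})
    -- `S` is an average ε-net
    (ε : ℝ)
    (hnet : (∫ x, simdist x (c x) ∂μ) ≤ ε)
    -- the stepwise averaging of `W` over the Voronoi cells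
    (WP : J → J → ℝ)
    (hWP : ∀ x y, WP x y =
      (∫ u in {z | c z = c x}, ∫ v in {z | c z = c y}, W u v ∂μ ∂μ) /
        ((μ {z | c z = c x}).toReal * (μ {z | c z = c y}).toReal)) :
    ∀ A B : Set J, MeasurableSet A → MeasurableSet B →
      |∫ u in A, ∫ v in B, (W u v - WP u v) ∂μ ∂μ| ≤ 8 * Real.sqrt ε := by
  intro A B hA hB
  obtain rfl : simdist = simDist μ W := funext₂ hsim
  obtain rfl : WP = stepKernel μ c W := funext₂ hWP
  have hWabs : ∀ x y, |W x y| ≤ 1 := fun x y => abs_le.2 ⟨by linarith [hW0 x y], hW1 x y⟩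
  calc _ ≤ 2 * √(∫ x, simDist μ W x (c x) ∂μ) :=
        abs_setIntegral_setIntegral_sub_stepKernel_le hWmeas hWsymm hWabs hcS hcellmeas hA hB
    _ ≤ 2 * √ε := by gcongr
    _ ≤ 8 * √ε := by linarith [Real.sqrt_nonneg ε]

/-- If `S` is an average `ε`-net for the similarity metric `r_{W∘W}` of a
graphon `(J,W)`, then the partition of `J` into the Voronoi cells of `S` is a
weak regularity partition with error `8√ε`. The cell assignment is `c`, and
`WP` is the stepwise averaging of `W` over the Voronoi cells. -/
theorem voronoi_cells_weak_regularity
    {J : Type*} [MeasurableSpace J] (μ : Measure J) [IsProbabilityMeasure μ]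
    (W : J → J → ℝ)
    (hWmeas : Measurable (fun p : J × J => W p.1 p.2))
    (hWsymm : ∀ x y, W x y = W y x)
    (hW0 : ∀ x y, 0 ≤ W x y) (hW1 : ∀ x y, W x y ≤ 1)
    (simdist : J → J → ℝ)
    (hsim : ∀ a b, simdist a b = ∫ x, |∫ y, W x y * (W y a - W y b) ∂μ| ∂μ)
    (S : Finset J) (hS : S.Nonempty)
    -- `c` assigns to each point the center of its Voronoi cell
    (c : J → J) (hcS : ∀ x, c x ∈ S)
    (hvoronoi : ∀ x, ∀ s ∈ S, simdist x (c x) ≤ simdist x s)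
    (hcellmeas : ∀ s ∈ S, MeasurableSet {z | c z = s})
    (hcellpos : ∀ s ∈ S, 0 < μ {z | c z = s})
    -- `S` is an average ε-net
    (ε : ℝ) (hε : 0 < ε)
    (hnet : (∫ x, simdist x (c x) ∂μ) ≤ ε)
    -- the stepwise averaging of `W` over the Voronoi cells
    (WP : J → J → ℝ)
    (hWP : ∀ x y, WP x y =
      (∫ u in {z | c z = c x}, ∫ v in {z | c z = c y}, W u v ∂μ ∂μ) /
        ((μ {z | c z = c x}).toReal * (μ {z | c z = c y}).toReal)) :
    ∀ A B : Set J, MeasurableSet A → MeasurableSet B →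
      |∫ u in A, ∫ v in B, (W u v - WP u v) ∂μ ∂μ| ≤ 8 * Real.sqrt ε :=
  voronoi_cells_weak_regularity_general μ W hWmeas hWsymm hW0 hW1 simdist hsim S c hcS hcellmeas ε
    hnet WP hWP
end

section
/- Let (J,W) be a graphon and P = {J₁,…,J_k} a weak regularity partition with error ε, i.e., ‖W − W_P‖_□ ≤ ε. Then there exist points v_i ∈ J_i such that S = {v₁,…,v_k} is an average (4ε)-net in the similarity metric: ∫_J min_i r_{W∘W}(x, v_i) dπ(x) ≤ 4ε. -/
/-!
Put `U = W - W_P` and `A(z, x) = ∫ W(z, y) U(y, x) dy`. For fixed `z` and measurable `T`,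
Fubini gives `∫_T A(z, ·) = ∫ W(z, y) g(y) dy` with `g(y) = ∫_T U(y, ·)`; since
`0 ≤ W(z, ·) ≤ 1`, this lies between the integrals of `g` over `{g ≤ 0}` and over `{g ≥ 0}`,
which the cut-norm bound puts in `[-ε, ε]`. Splitting `A(z, ·)` by sign then gives
`∫ |A(z, ·)| ≤ 2ε`, so `F(x) = ∫ |A(z, x)| dz` satisfies `∫ F ≤ 2ε`. When `x` and `v` lie in the
same class the columns `W_P(·, x)` and `W_P(·, v)` coincide, so
`W(·, x) - W(·, v) = U(·, x) - U(·, v)` and `r(x, v) ≤ F(x) + F(v)`. Choosing each `vᵢ` with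
`F(vᵢ)` at most the mean of `F` over `Jᵢ` yields `∫ minᵢ r(x, vᵢ) ≤ 2 ∫ F ≤ 4ε`.
-/

open MeasureTheory Function Set

theorem abs_mul_le_of_abs_le_one {a b C : ℝ} (ha : |a| ≤ 1) (hb : |b| ≤ C) : |a * b| ≤ C := by
  rw [abs_mul]
  exact (mul_le_of_le_one_left (abs_nonneg b) ha).trans hb

section SignedParts

variable {α : Type*} [MeasurableSpace α] {μ : Measure α} {g : α → ℝ} {ε : ℝ}

theorem abs_integral_mul_le_of_abs_setIntegral_le {w : α → ℝ} (hg : Measurable g)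
    (hgi : Integrable g μ) (hw : Measurable w) (hw0 : ∀ y, 0 ≤ w y) (hw1 : ∀ y, w y ≤ 1)
    (hcut : ∀ S, MeasurableSet S → |∫ y in S, g y ∂μ| ≤ ε) :
    |∫ y, w y * g y ∂μ| ≤ ε := by
  have hwg : Integrable (fun y => w y * g y) μ :=
    hgi.bdd_mul hw.aestronglyMeasurable (c := 1) (ae_of_all _ fun y => by
      rw [Real.norm_eq_abs, abs_of_nonneg (hw0 y)]; exact hw1 y)
  have hpos : MeasurableSet {y | 0 ≤ g y} := measurableSet_le measurable_const hg
  have hneg : MeasurableSet {y | g y ≤ 0} := measurableSet_le hg measurable_const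
  refine abs_le.mpr ⟨?_, ?_⟩
  · calc -ε ≤ ∫ y in {y | g y ≤ 0}, g y ∂μ := (abs_le.mp (hcut _ hneg)).1
      _ = ∫ y, {y | g y ≤ 0}.indicator g y ∂μ := (integral_indicator hneg).symm
      _ ≤ ∫ y, w y * g y ∂μ := integral_mono (hgi.indicator hneg) hwg fun y => by
          simp only [indicator_apply, mem_ofPred_eq]
          split_ifs with hy
          · nlinarith [hw0 y, hw1 y]
          · exact mul_nonneg (hw0 y) (le_of_not_ge hy)
  · calc ∫ y, w y * g y ∂μ ≤ ∫ y, {y | 0 ≤ g y}.indicator g y ∂μ :=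
          integral_mono hwg (hgi.indicator hpos) fun y => by
            simp only [indicator_apply, mem_ofPred_eq]
            split_ifs with hy
            · exact mul_le_of_le_one_left hy (hw1 y)
            · exact mul_nonpos_of_nonneg_of_nonpos (hw0 y) (le_of_not_ge hy)
      _ = ∫ y in {y | 0 ≤ g y}, g y ∂μ := integral_indicator hpos
      _ ≤ ε := (abs_le.mp (hcut _ hpos)).2

theorem integral_abs_le_two_mul_of_abs_setIntegral_le (hg : Measurable g) (hgi : Integrable g μ)
    (hcut : ∀ S, MeasurableSet S → |∫ y in S, g y ∂μ| ≤ ε) :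
    ∫ y, |g y| ∂μ ≤ 2 * ε := by
  have hS : MeasurableSet {y | 0 ≤ g y} := measurableSet_le measurable_const hg
  rw [← integral_add_compl hS hgi.abs, setIntegral_congr_fun hS fun y hy => abs_of_nonneg hy,
    setIntegral_congr_fun hS.compl fun y (hy : ¬0 ≤ g y) => abs_of_neg (not_le.mp hy),
    integral_neg]
  linarith [(abs_le.mp (hcut _ hS)).2, (abs_le.mp (hcut _ hS.compl)).1]

end SignedParts

section Partition

variable {α ι : Type*} {P : ι → Set α}

theorem exists_measurable_index_of_partition [MeasurableSpace α] [MeasurableSpace ι]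
    [MeasurableSingletonClass ι] [Countable ι] (hPmeas : ∀ i, MeasurableSet (P i))
    (hPdisj : Pairwise (Disjoint on P)) (hPcover : ⋃ i, P i = univ) :
    ∃ cls : α → ι, Measurable cls ∧ ∀ x i, x ∈ P i ↔ cls x = i := by
  choose cls hcls using iUnion_eq_univ_iff.mp hPcover
  have hiff : ∀ x i, x ∈ P i ↔ cls x = i := fun x i =>
    ⟨fun hx => by_contra fun h => disjoint_left.mp (hPdisj h) (hcls x) hx, fun h => h ▸ hcls x⟩
  refine ⟨cls, measurable_to_countable' fun i => ?_, hiff⟩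
  rw [show cls ⁻¹' {i} = P i from ext fun x => (hiff x i).symm]
  exact hPmeas i

section StepKernel

variable {K : α → α → ℝ} {c : ι → ι → ℝ}

theorem measurable_uncurry_of_step [MeasurableSpace α] [MeasurableSpace ι]
    [MeasurableSingletonClass ι] [Countable ι]
    (hPmeas : ∀ i, MeasurableSet (P i)) (hPdisj : Pairwise (Disjoint on P))
    (hPcover : ⋃ i, P i = univ) (hK : ∀ i j, ∀ x ∈ P i, ∀ y ∈ P j, K x y = c i j) :
    Measurable (uncurry K) := by
  obtain ⟨cls, hcls_meas, hcls⟩ := exists_measurable_index_of_partition hPmeas hPdisj hPcover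
  have hKc : uncurry K = uncurry c ∘ Prod.map cls cls := funext fun p =>
    hK _ _ p.1 ((hcls p.1 _).2 rfl) p.2 ((hcls p.2 _).2 rfl)
  rw [hKc]
  exact (measurable_of_countable _).comp (hcls_meas.prodMap hcls_meas)

theorem exists_abs_le_of_step [Finite ι] (hPcover : ⋃ i, P i = univ)
    (hK : ∀ i j, ∀ x ∈ P i, ∀ y ∈ P j, K x y = c i j) : ∃ C, ∀ x y, |K x y| ≤ C := by
  obtain ⟨C, hC⟩ := Finite.exists_le fun p : ι × ι => |c p.1 p.2|
  refine ⟨C, fun x y => ?_⟩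
  obtain ⟨i, hx⟩ := iUnion_eq_univ_iff.mp hPcover x
  obtain ⟨j, hy⟩ := iUnion_eq_univ_iff.mp hPcover y
  rw [hK i j x hx y hy]
  exact hC (i, j)

theorem apply_eq_apply_of_step (hPcover : ⋃ i, P i = univ)
    (hK : ∀ i j, ∀ x ∈ P i, ∀ y ∈ P j, K x y = c i j) {i : ι} {x v : α} (hx : x ∈ P i)
    (hv : v ∈ P i) (y : α) : K y x = K y v := by
  obtain ⟨j, hy⟩ := iUnion_eq_univ_iff.mp hPcover y
  rw [hK j i y hy x hx, hK j i y hy v hv]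

end StepKernel

theorem exists_mem_integral_inf'_le_two_mul_integral [MeasurableSpace α] [Fintype ι]
    {μ : Measure α} [IsFiniteMeasure μ] (hne : (Finset.univ : Finset ι).Nonempty)
    (hPmeas : ∀ i, MeasurableSet (P i)) (hPdisj : Pairwise (Disjoint on P))
    (hPcover : ⋃ i, P i = univ) (hPpos : ∀ i, μ (P i) ≠ 0) {F : α → ℝ} (hF : Integrable F μ)
    {d : α → α → ℝ} (hd : ∀ v, Integrable (fun x => d x v) μ)
    (hdF : ∀ i, ∀ x ∈ P i, ∀ v ∈ P i, d x v ≤ F x + F v) :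
    ∃ v : ι → α, (∀ i, v i ∈ P i) ∧
      ∫ x, Finset.univ.inf' hne (fun i => d x (v i)) ∂μ ≤ 2 * ∫ x, F x ∂μ := by
  choose v hvP hvF using fun i =>
    exists_le_setAverage (hPpos i) (measure_ne_top μ _) (hF.integrableOn (s := P i))
  refine ⟨v, hvP, ?_⟩
  have hinf : Integrable (fun x => Finset.univ.inf' hne fun i => d x (v i)) μ := by
    have h := Finset.inf'_induction hne (fun i x => d x (v i)) (p := (Integrable · μ))
      (fun f hf g hg => hf.inf hg) fun i _ => hd (v i)
    exact h.congr (ae_of_all _ fun x => Finset.inf'_apply hne _ x)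
  have hsplit : ∀ f : α → ℝ, Integrable f μ → ∫ x, f x ∂μ = ∑ i, ∫ x in P i, f x ∂μ :=
    fun f hf => by
      rw [← integral_iUnion_fintype hPmeas hPdisj fun i => hf.integrableOn, hPcover,
        Measure.restrict_univ]
  have hrep : ∀ i, μ.real (P i) * F (v i) ≤ ∫ x in P i, F x ∂μ := fun i => by
    have hpos : 0 < μ.real (P i) := ENNReal.toReal_pos (hPpos i) (measure_ne_top μ _)
    simpa only [setAverage_eq, smul_eq_mul, le_inv_mul_iff₀ hpos] using hvF i
  calc ∫ x, Finset.univ.inf' hne (fun i => d x (v i)) ∂μ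
      = ∑ i, ∫ x in P i, Finset.univ.inf' hne (fun j => d x (v j)) ∂μ := hsplit _ hinf
    _ ≤ ∑ i, ∫ x in P i, (F x + F (v i)) ∂μ := Finset.sum_le_sum fun i _ =>
        setIntegral_mono_on hinf.integrableOn (hF.add (integrable_const _)).integrableOn
          (hPmeas i) fun x hx =>
            (Finset.inf'_le _ (Finset.mem_univ i)).trans (hdF i x hx (v i) (hvP i))
    _ ≤ ∑ i, 2 * ∫ x in P i, F x ∂μ := Finset.sum_le_sum fun i _ => by
        rw [integral_add hF.integrableOn (integrable_const _), setIntegral_const, smul_eq_mul]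
        linarith [hrep i]
    _ = 2 * ∫ x, F x ∂μ := by rw [← Finset.mul_sum, ← hsplit F hF]

end Partition

section KernelComp

variable {J : Type*} [MeasurableSpace J] {μ : Measure J} {K L : J → J → ℝ} {C ε : ℝ}

noncomputable def kernelComp (μ : Measure J) (K L : J → J → ℝ) (z x : J) : ℝ :=
  ∫ y, K z y * L y x ∂μ

theorem measurable_kernelComp [SFinite μ] (hK : Measurable (uncurry K))
    (hL : Measurable (uncurry L)) : Measurable (uncurry (kernelComp μ K L)) := by
  have h : Measurable fun p : (J × J) × J => K p.1.1 p.2 * L p.2 p.1.2 :=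
    (hK.comp (measurable_fst.fst.prodMk measurable_snd)).mul
      (hL.comp (measurable_snd.prodMk measurable_fst.snd))
  exact h.stronglyMeasurable.integral_prod_right'.measurable

variable [IsProbabilityMeasure μ]

theorem integrable_kernelComp_integrand (hK : Measurable (uncurry K)) (hK1 : ∀ z y, |K z y| ≤ 1)
    (hL : Measurable (uncurry L)) (hLC : ∀ y x, |L y x| ≤ C) (z x : J) :
    Integrable (fun y => K z y * L y x) μ :=
  .of_bound ((hK.comp (measurable_const.prodMk measurable_id)).mul
    (hL.comp (measurable_id.prodMk measurable_const))).aestronglyMeasurable C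
    (ae_of_all _ fun y => abs_mul_le_of_abs_le_one (hK1 z y) (hLC y x))

theorem abs_kernelComp_le (hK1 : ∀ z y, |K z y| ≤ 1) (hLC : ∀ y x, |L y x| ≤ C) (z x : J) :
    |kernelComp μ K L z x| ≤ C := by
  simpa [kernelComp] using
    norm_integral_le_of_norm_le_const (μ := μ) (f := fun y => K z y * L y x)
      (ae_of_all _ fun y => abs_mul_le_of_abs_le_one (hK1 z y) (hLC y x))

theorem integrable_abs_kernelComp_swap (hK : Measurable (uncurry K)) (hK1 : ∀ z y, |K z y| ≤ 1)
    (hL : Measurable (uncurry L)) (hLC : ∀ y x, |L y x| ≤ C) :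
    Integrable (fun p : J × J => |kernelComp μ K L p.2 p.1|) (μ.prod μ) :=
  .of_bound ((measurable_kernelComp hK hL).comp measurable_swap).abs.aestronglyMeasurable C
    (ae_of_all _ fun p => by simpa using abs_kernelComp_le hK1 hLC p.2 p.1)

theorem integrable_integral_abs_kernelComp (hK : Measurable (uncurry K))
    (hK1 : ∀ z y, |K z y| ≤ 1) (hL : Measurable (uncurry L)) (hLC : ∀ y x, |L y x| ≤ C) :
    Integrable (fun x => ∫ z, |kernelComp μ K L z x| ∂μ) μ :=
  (integrable_abs_kernelComp_swap hK hK1 hL hLC).integral_prod_left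

theorem setIntegral_kernelComp (hK : Measurable (uncurry K)) (hK1 : ∀ z y, |K z y| ≤ 1)
    (hL : Measurable (uncurry L)) (hLC : ∀ y x, |L y x| ≤ C) (z : J) (T : Set J) :
    ∫ x in T, kernelComp μ K L z x ∂μ = ∫ y, K z y * ∫ x in T, L y x ∂μ ∂μ := by
  have hint : Integrable (uncurry fun x y => K z y * L y x) ((μ.restrict T).prod μ) :=
    .of_bound (((hK.comp (measurable_const.prodMk measurable_snd)).mul
      (hL.comp measurable_swap))).aestronglyMeasurable C
      (ae_of_all _ fun p => abs_mul_le_of_abs_le_one (hK1 z p.2) (hLC p.2 p.1))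
  simp only [kernelComp, ← integral_const_mul]
  exact integral_integral_swap hint

theorem abs_setIntegral_kernelComp_le (hK : Measurable (uncurry K)) (hK0 : ∀ z y, 0 ≤ K z y)
    (hK1 : ∀ z y, K z y ≤ 1) (hL : Measurable (uncurry L)) (hLC : ∀ y x, |L y x| ≤ C)
    (hcut : ∀ S T, MeasurableSet S → MeasurableSet T →
      |∫ y in S, ∫ x in T, L y x ∂μ ∂μ| ≤ ε) (z : J) {T : Set J} (hT : MeasurableSet T) :
    |∫ x in T, kernelComp μ K L z x ∂μ| ≤ ε := by
  have hKabs : ∀ z y, |K z y| ≤ 1 := fun z y =>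
    (abs_of_nonneg (hK0 z y)).trans_le (hK1 z y)
  rw [setIntegral_kernelComp hK hKabs hL hLC z T]
  have hLT : Integrable (uncurry L) (μ.prod (μ.restrict T)) :=
    .of_bound hL.aestronglyMeasurable C (ae_of_all _ fun p => hLC p.1 p.2)
  exact abs_integral_mul_le_of_abs_setIntegral_le
    hL.stronglyMeasurable.integral_prod_right.measurable hLT.integral_prod_left
    (hK.comp (measurable_const.prodMk measurable_id)) (hK0 z) (hK1 z) fun S hS => hcut S T hS hT

theorem integral_abs_kernelComp_le (hK : Measurable (uncurry K)) (hK0 : ∀ z y, 0 ≤ K z y)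
    (hK1 : ∀ z y, K z y ≤ 1) (hL : Measurable (uncurry L)) (hLC : ∀ y x, |L y x| ≤ C)
    (hcut : ∀ S T, MeasurableSet S → MeasurableSet T →
      |∫ y in S, ∫ x in T, L y x ∂μ ∂μ| ≤ ε) (z : J) :
    ∫ x, |kernelComp μ K L z x| ∂μ ≤ 2 * ε := by
  have hAz : Measurable fun x => kernelComp μ K L z x :=
    (measurable_kernelComp hK hL).comp (measurable_const.prodMk measurable_id)
  have hKabs : ∀ z y, |K z y| ≤ 1 := fun z y =>
    (abs_of_nonneg (hK0 z y)).trans_le (hK1 z y)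
  exact integral_abs_le_two_mul_of_abs_setIntegral_le hAz
    (.of_bound hAz.aestronglyMeasurable C (ae_of_all _ (abs_kernelComp_le hKabs hLC z)))
    fun T hT => abs_setIntegral_kernelComp_le hK hK0 hK1 hL hLC hcut z hT

theorem integral_integral_abs_kernelComp_le (hK : Measurable (uncurry K))
    (hK0 : ∀ z y, 0 ≤ K z y) (hK1 : ∀ z y, K z y ≤ 1) (hL : Measurable (uncurry L))
    (hLC : ∀ y x, |L y x| ≤ C)
    (hcut : ∀ S T, MeasurableSet S → MeasurableSet T →
      |∫ y in S, ∫ x in T, L y x ∂μ ∂μ| ≤ ε) :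
    ∫ x, ∫ z, |kernelComp μ K L z x| ∂μ ∂μ ≤ 2 * ε := by
  have hKabs : ∀ z y, |K z y| ≤ 1 := fun z y =>
    (abs_of_nonneg (hK0 z y)).trans_le (hK1 z y)
  rw [integral_integral_swap (integrable_abs_kernelComp_swap hK hKabs hL hLC)]
  calc ∫ z, ∫ x, |kernelComp μ K L z x| ∂μ ∂μ ≤ ∫ _, 2 * ε ∂μ :=
        integral_mono_of_nonneg (ae_of_all _ fun z => integral_nonneg fun x => abs_nonneg _)
          (integrable_const _)
          (ae_of_all _ (integral_abs_kernelComp_le hK hK0 hK1 hL hLC hcut))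
    _ = 2 * ε := by simp

theorem integral_abs_integral_mul_sub_le {U : J → J → ℝ} (hK : Measurable (uncurry K))
    (hK1 : ∀ z y, |K z y| ≤ 1) (hU : Measurable (uncurry U)) (hUC : ∀ y x, |U y x| ≤ C)
    {a b : J} (hab : ∀ y, L y a - L y b = U y a - U y b) :
    ∫ z, |∫ y, K z y * (L y a - L y b) ∂μ| ∂μ ≤
      ∫ z, |kernelComp μ K U z a| ∂μ + ∫ z, |kernelComp μ K U z b| ∂μ := by
  have hA : ∀ x, Integrable (fun z => |kernelComp μ K U z x|) μ := fun x =>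
    .of_bound ((measurable_kernelComp hK hU).comp
      (measurable_id.prodMk measurable_const)).abs.aestronglyMeasurable C
      (ae_of_all _ fun z => by simpa using abs_kernelComp_le hK1 hUC z x)
  have hdiff : ∀ z, ∫ y, K z y * (L y a - L y b) ∂μ =
      kernelComp μ K U z a - kernelComp μ K U z b := fun z => by
    simp only [hab, mul_sub, kernelComp]
    exact integral_sub (integrable_kernelComp_integrand hK hK1 hU hUC z a)
      (integrable_kernelComp_integrand hK hK1 hU hUC z b)
  rw [← integral_add (hA a) (hA b)]
  refine integral_mono_of_nonneg (ae_of_all _ fun z => abs_nonneg _) ((hA a).add (hA b))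
    (ae_of_all _ fun z => ?_)
  dsimp only
  rw [hdiff z]
  exact abs_sub _ _

end KernelComp

theorem weak_regularity_gives_average_net_general
    {J : Type*} [MeasurableSpace J] (μ : Measure J) [IsProbabilityMeasure μ]
    (W : J → J → ℝ)
    (hWmeas : Measurable (fun p : J × J => W p.1 p.2))
    (hW0 : ∀ x y, 0 ≤ W x y) (hW1 : ∀ x y, W x y ≤ 1)
    (simdist : J → J → ℝ)
    (hsim : ∀ a b, simdist a b = ∫ x, |∫ y, W x y * (W y a - W y b) ∂μ| ∂μ)
    (k : ℕ) (hk : 0 < k)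
    (P : Fin k → Set J)
    (hPmeas : ∀ i, MeasurableSet (P i))
    (hPdisj : ∀ i j, i ≠ j → Disjoint (P i) (P j))
    (hPcover : (⋃ i, P i) = Set.univ)
    (hPpos : ∀ i, 0 < μ (P i))
    (WP : J → J → ℝ)
    (hWP : ∀ i j, ∀ x ∈ P i, ∀ y ∈ P j, WP x y =
      (∫ u in P i, ∫ v in P j, W u v ∂μ ∂μ) /
        ((μ (P i)).toReal * (μ (P j)).toReal))
    (ε : ℝ)
    (hcut : ∀ A B : Set J, MeasurableSet A → MeasurableSet B →
      |∫ u in A, ∫ v in B, (W u v - WP u v) ∂μ ∂μ| ≤ ε) :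
    ∃ v : Fin k → J, (∀ i, v i ∈ P i) ∧
      (∫ x, (Finset.univ.inf' (Finset.univ_nonempty_iff.mpr ⟨⟨0, hk⟩⟩)
        fun i => simdist x (v i)) ∂μ) ≤ 4 * ε := by
  have hW : ∀ x y, |W x y| ≤ 1 := fun x y =>
    (abs_of_nonneg (hW0 x y)).trans_le (hW1 x y)
  obtain ⟨C, hC⟩ := exists_abs_le_of_step hPcover hWP
  have hU : Measurable (uncurry (W - WP)) :=
    hWmeas.sub (measurable_uncurry_of_step hPmeas hPdisj hPcover hWP)
  have hUC : ∀ y x, |(W - WP) y x| ≤ 1 + C := fun y x =>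
    (abs_sub _ _).trans (add_le_add (hW y x) (hC y x))
  have hcol : ∀ b : J, Measurable (uncurry fun y x => W y x - W y b) := fun b =>
    hWmeas.sub (hWmeas.comp (measurable_fst.prodMk measurable_const))
  obtain ⟨v, hvP, hv⟩ := exists_mem_integral_inf'_le_two_mul_integral
    (Finset.univ_nonempty_iff.mpr ⟨⟨0, hk⟩⟩) hPmeas hPdisj hPcover (fun i => (hPpos i).ne')
    (integrable_integral_abs_kernelComp hWmeas hW hU hUC) (d := simdist)
    (fun b => (integrable_integral_abs_kernelComp hWmeas hW (hcol b)
      (fun y x => (abs_sub _ _).trans (add_le_add (hW y x) (hW y b)))).congr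
      (ae_of_all _ fun x => (hsim x b).symm))
    (fun i x hx b hb => (hsim x b).trans_le <|
      integral_abs_integral_mul_sub_le hWmeas hW hU hUC fun y => by
        simp only [Pi.sub_apply, apply_eq_apply_of_step hPcover hWP hx hb y]
        ring)
  refine ⟨v, hvP, hv.trans ?_⟩
  linarith [integral_integral_abs_kernelComp_le hWmeas hW0 hW1 hU hUC hcut]

/-- If `P = {J₁,…,J_k}` is a weak regularity partition of a graphon `(J,W)`
with error `ε` (in the cut norm), then one can choose points `vᵢ ∈ Jᵢ` forming
an average `4ε`-net in the similarity metric `r_{W∘W}`. -/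
theorem weak_regularity_gives_average_net
    {J : Type*} [MeasurableSpace J] (μ : Measure J) [IsProbabilityMeasure μ]
    (W : J → J → ℝ)
    (hWmeas : Measurable (fun p : J × J => W p.1 p.2))
    (hWsymm : ∀ x y, W x y = W y x)
    (hW0 : ∀ x y, 0 ≤ W x y) (hW1 : ∀ x y, W x y ≤ 1)
    (simdist : J → J → ℝ)
    (hsim : ∀ a b, simdist a b = ∫ x, |∫ y, W x y * (W y a - W y b) ∂μ| ∂μ)
    (k : ℕ) (hk : 0 < k)
    (P : Fin k → Set J)
    (hPmeas : ∀ i, MeasurableSet (P i))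
    (hPdisj : ∀ i j, i ≠ j → Disjoint (P i) (P j))
    (hPcover : (⋃ i, P i) = Set.univ)
    (hPpos : ∀ i, 0 < μ (P i))
    (WP : J → J → ℝ)
    (hWP : ∀ i j, ∀ x ∈ P i, ∀ y ∈ P j, WP x y =
      (∫ u in P i, ∫ v in P j, W u v ∂μ ∂μ) /
        ((μ (P i)).toReal * (μ (P j)).toReal))
    (ε : ℝ) (hε : 0 < ε)
    (hcut : ∀ A B : Set J, MeasurableSet A → MeasurableSet B →
      |∫ u in A, ∫ v in B, (W u v - WP u v) ∂μ ∂μ| ≤ ε) :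
    ∃ v : Fin k → J, (∀ i, v i ∈ P i) ∧
      (∫ x, (Finset.univ.inf' (Finset.univ_nonempty_iff.mpr ⟨⟨0, hk⟩⟩)
        fun i => simdist x (v i)) ∂μ) ≤ 4 * ε :=
  weak_regularity_gives_average_net_general μ W hWmeas hW0 hW1 simdist hsim k hk P hPmeas hPdisj
    hPcover hPpos WP hWP ε hcut
end

section
/- Let W be a graphon such that the metric space (J, r_W) can be covered by m balls of radius ε (for some 0 < ε < 1). Then there exists a stepfunction U with at most m·(1/ε)^m steps such that ‖W − U‖₁ ≤ 2ε. -/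
open MeasureTheory

/-!
Make the balls `{x | r_W(x, cᵢ) ≤ ε}` around the centres disjoint. On the cell of `cᵢ`, replace
the row `W(x, ·)` by `W(cᵢ, ·)`, at an `L¹` cost of `r_W(x, cᵢ) ≤ ε`, and then round `W(cᵢ, y)`
up to the grid `ε, 2ε, …, (K + 1)ε` with `K + 1 ≤ 1/ε`, at a pointwise cost of `ε`. The result
depends on `x` only through its cell and on `y` only through the grid indices of
`(W(cᵢ, y))ᵢ`, so it is a stepfunction with at most `m · (K + 1)^m ≤ m · (1/ε)^m` steps.
-/

noncomputable def gridIndex (ε : ℝ) (K : ℕ) (t : ℝ) : Fin (K + 1) :=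
  Fin.clamp ⌊t / ε⌋₊ K

lemma measurable_gridIndex (ε : ℝ) (K : ℕ) : Measurable (gridIndex ε K) :=
  (measurable_from_top (f := fun n : ℕ => Fin.clamp n K)).comp
    (Nat.measurable_floor.comp (measurable_id.div_const ε))

lemma abs_sub_gridIndex_le {ε t : ℝ} {K : ℕ} (hε : 0 < ε) (ht : 0 ≤ t)
    (htK : t ≤ ε * (K + 2)) : |t - ε * ((gridIndex ε K t : ℕ) + 1)| ≤ ε := by
  have hfloor_le : ε * ⌊t / ε⌋₊ ≤ t := (le_div_iff₀' hε).mp (Nat.floor_le (by positivity))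
  have hlt_floor : t < ε * (⌊t / ε⌋₊ + 1) := (div_lt_iff₀' hε).mp (Nat.lt_floor_add_one _)
  rw [gridIndex, Fin.coe_clamp, abs_le]
  rcases min_cases ⌊t / ε⌋₊ K with ⟨hmin, -⟩ | ⟨hmin, hKlt⟩
  · rw [hmin]
    constructor <;> linarith
  · have hK : ε * (K + 1) ≤ ε * ⌊t / ε⌋₊ := by gcongr; exact_mod_cast hKlt
    rw [hmin]
    constructor <;> linarith

lemma exists_nat_add_one_le_lt_add_two {x : ℝ} (hx : 1 ≤ x) : ∃ K : ℕ, K + 1 ≤ x ∧ x < K + 2 := by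
  refine ⟨⌊x - 1⌋₊, ?_, ?_⟩
  · linarith [Nat.floor_le (sub_nonneg.mpr hx)]
  · linarith [Nat.lt_floor_add_one (x - 1)]

section

variable {α : Type*} [MeasurableSpace α]

lemma exists_measurable_selector_of_cover {ι : Type*} [MeasurableSpace ι] [Countable ι]
    [LinearOrder ι] [LocallyFiniteOrderBot ι] {A : ι → Set α} (hA : ∀ i, MeasurableSet (A i))
    (hcover : ∀ x, ∃ i, x ∈ A i) : ∃ f : α → ι, Measurable f ∧ ∀ x, x ∈ A (f x) := by
  have hcover' : ∀ x, ∃ i, x ∈ disjointed A i := fun x => by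
    simpa only [← Set.mem_iUnion, iUnion_disjointed] using hcover x
  choose f hf using hcover'
  have hfiber : ∀ i, f ⁻¹' {i} = disjointed A i := fun i => by
    ext x
    refine ⟨fun hx => hx ▸ hf x, fun hx => ?_⟩
    by_contra hne
    exact Set.disjoint_left.mp (disjoint_disjointed A hne) (hf x) hx
  refine ⟨f, measurable_to_countable' fun i => ?_, fun x => disjointed_subset A _ (hf x)⟩
  rw [hfiber, disjointed_eq_inter_compl]
  exact (hA i).inter (.iInter fun j => .iInter fun _ => (hA j).compl)

lemma exists_fin_partition_of_measurable {ι : Type*} [Fintype ι] [MeasurableSpace ι]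
    [MeasurableSingletonClass ι] {f : α → ι} (hf : Measurable f) :
    ∃ P : Fin (Fintype.card ι) → Set α, (∀ i, MeasurableSet (P i)) ∧
      (∀ i j, i ≠ j → Disjoint (P i) (P j)) ∧ (⋃ i, P i) = Set.univ ∧
      ∀ i, ∀ x ∈ P i, ∀ x' ∈ P i, f x = f x' := by
  let e := Fintype.equivFin ι
  refine ⟨fun i => f ⁻¹' {e.symm i}, fun i => hf (measurableSet_singleton _), fun i j hij => ?_,
    Set.iUnion_eq_univ_iff.mpr fun x => ⟨e (f x), by simp⟩, fun i x hx x' hx' => hx.trans hx'.symm⟩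
  exact (Set.disjoint_singleton.mpr (e.symm.injective.ne hij)).preimage f

lemma measurable_integral_abs_sub_row (μ : Measure α) [SFinite μ] {W : α → α → ℝ}
    (hW : Measurable fun p : α × α => W p.1 p.2) (c : α) :
    Measurable fun x => ∫ z, |W x z - W c z| ∂μ :=
  (hW.sub (hW.comp (measurable_const.prodMk measurable_snd))).abs.stronglyMeasurable
    |>.integral_prod_right' |>.measurable

lemma integral_abs_sub_le_of_abs_sub_le {μ : Measure α} [IsProbabilityMeasure μ]
    {f g h : α → ℝ} {δ : ℝ} (hfg : Integrable (fun y => f y - g y) μ)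
    (hgh : ∀ y, |g y - h y| ≤ δ) : ∫ y, |f y - h y| ∂μ ≤ ∫ y, |f y - g y| ∂μ + δ := by
  calc ∫ y, |f y - h y| ∂μ ≤ ∫ y, (|f y - g y| + δ) ∂μ :=
        integral_mono_of_nonneg (ae_of_all _ fun _ => abs_nonneg _)
          (hfg.abs.add (integrable_const δ))
          (ae_of_all _ fun y => (abs_sub_le _ (g y) _).trans (add_le_add_right (hgh y) _))
    _ = ∫ y, |f y - g y| ∂μ + δ := by
        rw [integral_add hfg.abs (integrable_const δ), integral_const]
        simp

lemma integral_le_of_nonneg_of_le {μ : Measure α} [IsProbabilityMeasure μ] {f : α → ℝ} {C : ℝ}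
    (hf0 : ∀ x, 0 ≤ f x) (hfC : ∀ x, f x ≤ C) : ∫ x, f x ∂μ ≤ C :=
  calc ∫ x, f x ∂μ ≤ ∫ _, C ∂μ :=
        integral_mono_of_nonneg (ae_of_all _ hf0) (integrable_const C) (ae_of_all _ hfC)
    _ = C := by simp

end

theorem stepfunction_approximation_of_covering_general
    {J : Type*} [MeasurableSpace J] (μ : Measure J) [IsProbabilityMeasure μ]
    (W : J → J → ℝ)
    (hWmeas : Measurable (fun p : J × J => W p.1 p.2))
    (hW0 : ∀ x y, 0 ≤ W x y) (hW1 : ∀ x y, W x y ≤ 1)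
    (rW : J → J → ℝ)
    (hrW : ∀ x y, rW x y = ∫ z, |W x z - W y z| ∂μ)
    (ε : ℝ) (hε0 : 0 < ε) (hε1 : ε < 1)
    (m : ℕ)
    (hcover : ∃ ctr : Fin m → J, ∀ y : J, ∃ i, rW y (ctr i) ≤ ε) :
    ∃ (n : ℕ) (P : Fin n → Set J) (U : J → J → ℝ),
      (n : ℝ) ≤ (m : ℝ) * (1 / ε) ^ m ∧
      (∀ i, MeasurableSet (P i)) ∧
      (∀ i j, i ≠ j → Disjoint (P i) (P j)) ∧
      (⋃ i, P i) = Set.univ ∧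
      -- `U` is a stepfunction with steps `P i`
      (∀ i j, ∀ x ∈ P i, ∀ y ∈ P j, ∀ x' ∈ P i, ∀ y' ∈ P j, U x y = U x' y') ∧
      (∫ x, ∫ y, |W x y - U x y| ∂μ ∂μ) ≤ 2 * ε := by
  obtain ⟨c, hc⟩ := hcover
  have hball : ∀ i, MeasurableSet {x | rW x (c i) ≤ ε} := fun i => by
    simp_rw [hrW]
    exact measurableSet_le (measurable_integral_abs_sub_row μ hWmeas (c i)) measurable_const
  obtain ⟨cell, hcell_meas, hcell⟩ := exists_measurable_selector_of_cover hball hc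
  obtain ⟨K, hK_le, hK_lt⟩ := exists_nat_add_one_le_lt_add_two (one_le_one_div hε0 hε1.le)
  have hgrid : 1 ≤ ε * (K + 2) := (div_le_iff₀' hε0).mp hK_lt.le
  have hWrow : ∀ x, Measurable (W x) := fun x => hWmeas.comp measurable_prodMk_left
  let idx : J → Fin m × (Fin m → Fin (K + 1)) :=
    fun y => (cell y, fun i => gridIndex ε K (W (c i) y))
  have hidx : Measurable idx := hcell_meas.prodMk
    (measurable_pi_lambda _ fun i => (measurable_gridIndex ε K).comp (hWrow (c i)))
  obtain ⟨P, hPmeas, hPdisj, hPcover, hPconst⟩ := exists_fin_partition_of_measurable hidx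
  let U : J → J → ℝ := fun x y => ε * (((idx y).2 (idx x).1 : ℕ) + 1)
  have hint : ∀ x, Integrable (W x) μ := fun x =>
    Integrable.of_mem_Icc 0 1 (hWrow x).aemeasurable (ae_of_all _ fun y => ⟨hW0 x y, hW1 x y⟩)
  have hrow : ∀ x, ∫ y, |W x y - U x y| ∂μ ≤ 2 * ε := fun x => by
    have hround : ∀ y, |W (c (cell x)) y - U x y| ≤ ε := fun y =>
      abs_sub_gridIndex_le hε0 (hW0 _ _) ((hW1 _ _).trans hgrid)
    have hclose : rW x (c (cell x)) ≤ ε := hcell x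
    linarith [hrW x (c (cell x)), integral_abs_sub_le_of_abs_sub_le ((hint x).sub (hint _)) hround]
  refine ⟨_, P, U, ?_, hPmeas, hPdisj, hPcover, ?_, ?_⟩
  · simp only [Fintype.card_prod, Fintype.card_fun, Fintype.card_fin]
    push_cast
    gcongr
  · intro i j x hx y hy x' hx' y' hy'
    simp only [U, hPconst i x hx x' hx', hPconst j y hy y' hy']
  · exact integral_le_of_nonneg_of_le (fun _ => integral_nonneg fun _ => abs_nonneg _) hrow

/-- If the metric space `(J, r_W)` of a graphon `W` can be covered by `m`
balls of radius `ε`, then there is a stepfunction `U` with at most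
`m·(1/ε)^m` steps such that `‖W − U‖₁ ≤ 2ε`. -/
theorem stepfunction_approximation_of_covering
    {J : Type*} [MeasurableSpace J] (μ : Measure J) [IsProbabilityMeasure μ]
    (W : J → J → ℝ)
    (hWmeas : Measurable (fun p : J × J => W p.1 p.2))
    (hWsymm : ∀ x y, W x y = W y x)
    (hW0 : ∀ x y, 0 ≤ W x y) (hW1 : ∀ x y, W x y ≤ 1)
    (rW : J → J → ℝ)
    (hrW : ∀ x y, rW x y = ∫ z, |W x z - W y z| ∂μ)
    (ε : ℝ) (hε0 : 0 < ε) (hε1 : ε < 1)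
    (m : ℕ)
    (hcover : ∃ ctr : Fin m → J, ∀ y : J, ∃ i, rW y (ctr i) ≤ ε) :
    ∃ (n : ℕ) (P : Fin n → Set J) (U : J → J → ℝ),
      (n : ℝ) ≤ (m : ℝ) * (1 / ε) ^ m ∧
      (∀ i, MeasurableSet (P i)) ∧
      (∀ i j, i ≠ j → Disjoint (P i) (P j)) ∧
      (⋃ i, P i) = Set.univ ∧
      -- `U` is a stepfunction with steps `P i`
      (∀ i j, ∀ x ∈ P i, ∀ y ∈ P j, ∀ x' ∈ P i, ∀ y' ∈ P j, U x y = U x' y') ∧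
      (∫ x, ∫ y, |W x y - U x y| ∂μ ∂μ) ≤ 2 * ε :=
  stepfunction_approximation_of_covering_general μ W hWmeas hW0 hW1 rW hrW ε hε0 hε1 m hcover
end
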